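/- arXiv:1708.00257 — 4 statements merged into one kernel-verified Lean document; each statement's English description precedes it below -/
import Mathlib

section
/- Let Y = L* + S* where L* ∈ ℝ^{n₁×n₂} has rank r and is μ-incoherent, and S* ∈ S_{γ*}. If γ > γ* and L⁽⁰⁾ is the rank-r approximation (in Frobenius norm) of F_γ(Y), then ‖L⁽⁰⁾ − L*‖_F ≤ 8 γ μ r √(2r) σ₁(L*), where σ₁(L*) is the largest singular value of L*. -/
/-!
Write `E = F_γ(Y) - L*`. Every entry of `L*` is at most `c = μ r σ₁ / √(n₁ n₂)` in absolute
value, and `S*` has fewer than `γ n₂` nonzero entries per row (`γ n₁` per column), so the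
`γ`-percentiles of `|Y|` along every row and column are at most `c`. Hence `|E i j| ≤ 2 c`, and
`E i j ≠ 0` only where `|Y i j|` exceeds its row percentile or `S* i j ≠ 0`, so `E ∈ S_{2γ}`.
A bounded matrix with that sparsity has operator norm at most `2 c · 2 γ √(n₁ n₂) = 4 γ μ r σ₁`.
Optimality of `L⁽⁰⁾` against `L*` gives `‖L⁽⁰⁾ - L*‖_F² ≤ 2 ⟪E, L⁽⁰⁾ - L*⟫`, and since
`D = L⁽⁰⁾ - L*` has rank at most `2 r`, `⟪E, D⟫ ≤ ‖E‖ √(2 r) ‖D‖_F`.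
-/


open Matrix MeasureTheory ProbabilityTheory Filter
open scoped BigOperators ENNReal NNReal

noncomputable section

namespace RPCA

variable {n₁ n₂ r : ℕ}

/-- Frobenius norm of a real matrix. -/
def frob (A : Matrix (Fin n₁) (Fin n₂) ℝ) : ℝ :=
  Real.sqrt (∑ i, ∑ j, (A i j) ^ 2)

/-- Frobenius inner product of two real matrices. -/
def finner (A B : Matrix (Fin n₁) (Fin n₂) ℝ) : ℝ :=
  ∑ i, ∑ j, A i j * B i j

/-- Spectral norm (operator norm) of a real matrix. -/
def spec (A : Matrix (Fin n₁) (Fin n₂) ℝ) : ℝ :=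
  sSup {c | ∃ v : Fin n₂ → ℝ, (∑ j, (v j) ^ 2) = 1 ∧
    c = Real.sqrt (∑ i, (∑ j, A i j * v j) ^ 2)}

/-- Smallest singular value of a square matrix. -/
def sigmaMin (A : Matrix (Fin r) (Fin r) ℝ) : ℝ :=
  sInf {c | ∃ v : Fin r → ℝ, (∑ k, (v k) ^ 2) = 1 ∧
    c = Real.sqrt (∑ i, (∑ k, A i k * v k) ^ 2)}

/-- The γ-th percentile (counting the fraction γ from the largest) of a multiset of reals. -/
def percentile (γ : ℝ) (s : Multiset ℝ) : ℝ :=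
  (s.sort (· ≤ ·)).getD (s.card - ⌈γ * s.card⌉₊) 0

/-- Absolute values of the entries of row `i`. -/
def rowAbs (A : Matrix (Fin n₁) (Fin n₂) ℝ) (i : Fin n₁) : Multiset ℝ :=
  (Finset.univ : Finset (Fin n₂)).val.map fun j => |A i j|

/-- Absolute values of the entries of column `j`. -/
def colAbs (A : Matrix (Fin n₁) (Fin n₂) ℝ) (j : Fin n₂) : Multiset ℝ :=
  (Finset.univ : Finset (Fin n₁)).val.map fun i => |A i j|

/-- The hard-thresholding operator `F_γ`: entries that are simultaneously above the γ-th
percentile of absolute values of their row and of their column are set to zero. -/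
def hardThresh (γ : ℝ) (A : Matrix (Fin n₁) (Fin n₂) ℝ) : Matrix (Fin n₁) (Fin n₂) ℝ :=
  Matrix.of fun i j =>
    if percentile γ (rowAbs A i) < |A i j| ∧ percentile γ (colAbs A j) < |A i j| then 0
    else A i j

/-- Absolute values of the observed entries of row `i`. -/
def rowAbsObs (Φ : Finset (Fin n₁ × Fin n₂)) (A : Matrix (Fin n₁) (Fin n₂) ℝ) (i : Fin n₁) :
    Multiset ℝ :=
  ((Φ.filter fun q => q.1 = i).val).map fun q => |A q.1 q.2|

/-- Absolute values of the observed entries of column `j`. -/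
def colAbsObs (Φ : Finset (Fin n₁ × Fin n₂)) (A : Matrix (Fin n₁) (Fin n₂) ℝ) (j : Fin n₂) :
    Multiset ℝ :=
  ((Φ.filter fun q => q.2 = j).val).map fun q => |A q.1 q.2|

/-- Partially observed thresholding operator `F̃_γ`: `F̃_ij A = A i j` if `|A i j|` exceeds the
γ-th percentile of absolute values of observed entries in both its row and its column,
and `0` otherwise. -/
def hardThreshObs (γ : ℝ) (Φ : Finset (Fin n₁ × Fin n₂)) (A : Matrix (Fin n₁) (Fin n₂) ℝ) :
    Matrix (Fin n₁) (Fin n₂) ℝ :=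
  Matrix.of fun i j =>
    if percentile γ (rowAbsObs Φ A i) < |A i j| ∧ percentile γ (colAbsObs Φ A j) < |A i j| then
      A i j
    else 0

/-- `P_Φ`: zero out the entries outside the observed set `Φ`. -/
def projObs (Φ : Finset (Fin n₁ × Fin n₂)) (A : Matrix (Fin n₁) (Fin n₂) ℝ) :
    Matrix (Fin n₁) (Fin n₂) ℝ :=
  Matrix.of fun i j => if (i, j) ∈ Φ then A i j else 0

/-- The sparsity class `S_{γ*}`: at most `γ* n₂` nonzero entries in each row and at most
`γ* n₁` nonzero entries in each column. -/
def SparseSet (γs : ℝ) (A : Matrix (Fin n₁) (Fin n₂) ℝ) : Prop :=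
  (∀ i, (((Finset.univ : Finset (Fin n₂)).filter fun j => A i j ≠ 0).card : ℝ) ≤ γs * n₂) ∧
  (∀ j, (((Finset.univ : Finset (Fin n₁)).filter fun i => A i j ≠ 0).card : ℝ) ≤ γs * n₁)

/-- Thin SVD `L = U (diagonal s) Vᵀ` with orthonormal `U, V` and positive decreasing
singular values `s`; this encodes that `L` has rank exactly `r`. -/
def IsThinSVD (L : Matrix (Fin n₁) (Fin n₂) ℝ) (U : Matrix (Fin n₁) (Fin r) ℝ)
    (s : Fin r → ℝ) (V : Matrix (Fin n₂) (Fin r) ℝ) : Prop :=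
  Uᵀ * U = 1 ∧ Vᵀ * V = 1 ∧ Antitone s ∧ (∀ k, 0 < s k) ∧ L = U * Matrix.diagonal s * Vᵀ

/-- μ-incoherence of the orthonormal SVD factors `U, V`: every row of `U` has Euclidean norm
at most `√(μ r / n₁)` and every row of `V` has Euclidean norm at most `√(μ r / n₂)`. -/
def Incoherent (μc : ℝ) (U : Matrix (Fin n₁) (Fin r) ℝ) (V : Matrix (Fin n₂) (Fin r) ℝ) :
    Prop :=
  (∀ i, Real.sqrt (∑ k, (U i k) ^ 2) ≤ Real.sqrt (μc * r / n₁)) ∧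
  (∀ j, Real.sqrt (∑ k, (V j k) ^ 2) ≤ Real.sqrt (μc * r / n₂))

/-- Tangent-space projection `P_{T_X} D = UUᵀD + DVVᵀ − UUᵀDVVᵀ` at a rank-r point with
orthonormal factors `U, V`. -/
def tangentProj (U : Matrix (Fin n₁) (Fin r) ℝ) (V : Matrix (Fin n₂) (Fin r) ℝ)
    (D : Matrix (Fin n₁) (Fin n₂) ℝ) : Matrix (Fin n₁) (Fin n₂) ℝ :=
  U * Uᵀ * D + D * (V * Vᵀ) - U * Uᵀ * D * (V * Vᵀ)

/-- `Z` is a best rank-r approximation of `M` in Frobenius norm. -/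
def IsBestRankApprox (r : ℕ) (M Z : Matrix (Fin n₁) (Fin n₂) ℝ) : Prop :=
  Z.rank ≤ r ∧ ∀ W : Matrix (Fin n₁) (Fin n₂) ℝ, W.rank ≤ r → frob (M - Z) ≤ frob (M - W)

/-- Orthographic retraction formula `M V (Uᵀ M V)⁻¹ Uᵀ M` where `M = X + δ`. -/
def orthoRetract (U : Matrix (Fin n₁) (Fin r) ℝ) (V : Matrix (Fin n₂) (Fin r) ℝ)
    (M : Matrix (Fin n₁) (Fin n₂) ℝ) : Matrix (Fin n₁) (Fin n₂) ℝ :=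
  M * V * (Uᵀ * M * V)⁻¹ * (Uᵀ * M)

/-- `Lnext` is obtained from `Lk` by applying either the projective or the orthographic
retraction (for the rank-r manifold) to the tangent vector `δ` at `Lk`. -/
def IsRetractUpdate (r : ℕ) (Lk δ Lnext : Matrix (Fin n₁) (Fin n₂) ℝ) : Prop :=
  IsBestRankApprox r (Lk + δ) Lnext ∨
  ∃ (U : Matrix (Fin n₁) (Fin r) ℝ) (s : Fin r → ℝ) (V : Matrix (Fin n₂) (Fin r) ℝ),
    IsThinSVD Lk U s V ∧ Lnext = orthoRetract U V (Lk + δ)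

/-- One step of manifold gradient descent with the fully observed thresholded gradient:
`Lnext = R_{Lk}(−η P_{T_{Lk}} F_γ(Lk − Y))`. -/
def IsGradStep (γ η : ℝ) (r : ℕ) (Y Lk Lnext : Matrix (Fin n₁) (Fin n₂) ℝ) : Prop :=
  ∃ (U : Matrix (Fin n₁) (Fin r) ℝ) (s : Fin r → ℝ) (V : Matrix (Fin n₂) (Fin r) ℝ),
    IsThinSVD Lk U s V ∧
    IsRetractUpdate r Lk (-(η • tangentProj U V (hardThresh γ (Lk - Y)))) Lnext

/-- One step of manifold gradient descent with the partially observed thresholded gradient: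
`Lnext = R_{Lk}(−η P_{T_{Lk}} F̃_γ(Lk − Y))`. -/
def IsGradStepObs (γ η : ℝ) (r : ℕ) (Φ : Finset (Fin n₁ × Fin n₂))
    (Y Lk Lnext : Matrix (Fin n₁) (Fin n₂) ℝ) : Prop :=
  ∃ (U : Matrix (Fin n₁) (Fin r) ℝ) (s : Fin r → ℝ) (V : Matrix (Fin n₂) (Fin r) ℝ),
    IsThinSVD Lk U s V ∧
    IsRetractUpdate r Lk (-(η • tangentProj U V (hardThreshObs γ Φ (Lk - Y)))) Lnext

end RPCA

theorem List.Pairwise.length_sub_le_countP_lt {α : Type*} [LinearOrder α] {l : List α}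
    (hl : l.Pairwise (· ≤ ·)) {m : ℕ} (hm : m < l.length) {t : α} (ht : t < l[m]) :
    l.length - m ≤ l.countP (fun x => t < x) := by
  have hdrop : (l.drop m).countP (fun x => t < x) = (l.drop m).length := by
    rw [List.countP_eq_length]
    intro x hx
    obtain ⟨i, hi, rfl⟩ := List.getElem_of_mem hx
    rw [List.getElem_drop]
    have := hl.rel_get_of_le (a := ⟨m, hm⟩) (b := ⟨m + i, by simp at hi; omega⟩) (by simp)
    simpa using ht.trans_le this
  have := List.countP_append (l₁ := l.take m) (l₂ := l.drop m) (p := fun x => t < x)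
  rw [List.take_append_drop, hdrop, List.length_drop] at this
  omega

theorem List.Pairwise.countP_getElem_lt_le {α : Type*} [LinearOrder α] {l : List α}
    (hl : l.Pairwise (· ≤ ·)) {m : ℕ} (hm : m < l.length) :
    l.countP (fun x => l[m] < x) ≤ l.length - (m + 1) := by
  have htake : (l.take (m + 1)).countP (fun x => l[m] < x) = 0 := by
    rw [List.countP_eq_zero]
    intro x hx
    obtain ⟨i, hi, rfl⟩ := List.getElem_of_mem hx
    rw [List.getElem_take]
    have := hl.rel_get_of_le (a := ⟨i, by simp at hi; omega⟩) (b := ⟨m, hm⟩)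
      (by simp at hi ⊢; omega)
    simpa using this
  have := List.countP_append (l₁ := l.take (m + 1)) (l₂ := l.drop (m + 1))
    (p := fun x => l[m] < x)
  rw [List.take_append_drop, htake] at this
  have := List.countP_le_length (p := fun x => l[m] < x) (l := l.drop (m + 1))
  simp only [List.length_drop] at this
  omega

theorem Matrix.rank_sub_le {m n K : Type*} [Fintype m] [Fintype n] [Field K]
    (A B : Matrix m n K) : (A - B).rank ≤ A.rank + B.rank := by
  rw [Matrix.rank, Matrix.rank, Matrix.rank]
  have h : LinearMap.range (A - B).mulVecLin ≤
      LinearMap.range A.mulVecLin ⊔ LinearMap.range B.mulVecLin := by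
    rintro x ⟨y, rfl⟩
    rw [mulVecLin_apply, sub_mulVec]
    exact Submodule.sub_mem _ (Submodule.mem_sup_left (LinearMap.mem_range_self _ y))
      (Submodule.mem_sup_right (LinearMap.mem_range_self _ y))
  exact (Submodule.finrank_mono h).trans (Submodule.finrank_add_le_finrank_add_finrank _ _)

theorem Matrix.isHermitian_transpose_mul_self {m n : Type*} [Fintype m] (D : Matrix m n ℝ) :
    (Dᵀ * D).IsHermitian := by
  simpa only [conjTranspose_eq_transpose_of_trivial] using isHermitian_conjTranspose_mul_self D

theorem OrthonormalBasis.ofLp_dotProduct_self {ι : Type*} [Fintype ι]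
    (b : OrthonormalBasis ι ℝ (EuclideanSpace ℝ ι)) (k : ι) :
    (b k).ofLp ⬝ᵥ (b k).ofLp = 1 := by
  have := EuclideanSpace.real_norm_sq_eq (b k)
  rw [b.orthonormal.1 k, one_pow] at this
  simpa [dotProduct, sq] using this.symm

theorem Matrix.IsHermitian.mulVec_eigenvectorBasis_dotProduct_self {m n : Type*} [Fintype m]
    [Fintype n] [DecidableEq n] (D : Matrix m n ℝ) (hG : (Dᵀ * D).IsHermitian) (k : n) :
    (D *ᵥ (hG.eigenvectorBasis k).ofLp) ⬝ᵥ (D *ᵥ (hG.eigenvectorBasis k).ofLp) =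
      hG.eigenvalues k := by
  rw [dotProduct_mulVec, ← mulVec_transpose, mulVec_mulVec, hG.mulVec_eigenvectorBasis,
    smul_dotProduct, OrthonormalBasis.ofLp_dotProduct_self, smul_eq_mul, mul_one]

theorem Real.sqrt_div_mul_sqrt_mul {x : ℝ} (hx : 0 ≤ x) {n : ℝ} (hn : 0 < n) (y : ℝ) :
    √(x / n) * √(y * n) = √(x * y) := by
  rw [← Real.sqrt_mul (div_nonneg hx hn.le)]
  congr 1
  field_simp

namespace RPCA

variable {n₁ n₂ r : ℕ}

theorem card_filter_eq_countP_sort (s : Multiset ℝ) (p : ℝ → Prop) [DecidablePred p] :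
    (s.filter p).card = (s.sort (· ≤ ·)).countP p := by
  conv_lhs => rw [← s.sort_eq (· ≤ ·)]
  rw [← Multiset.countP_eq_card_filter, Multiset.coe_countP]

theorem percentile_eq_getElem {γ : ℝ} {s : Multiset ℝ}
    (h : s.card - ⌈γ * s.card⌉₊ < s.card) :
    percentile γ s = (s.sort (· ≤ ·))[s.card - ⌈γ * s.card⌉₊]'(by simpa using h) :=
  List.getD_eq_getElem _ _ _

theorem percentile_le_of_card_filter_lt {γ t : ℝ} {s : Multiset ℝ} (hγ : γ ≤ 1)
    (h : ((s.filter fun x => t < x).card : ℝ) < γ * s.card) : percentile γ s ≤ t := by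
  have hk : (s.filter fun x => t < x).card < ⌈γ * s.card⌉₊ := Nat.lt_ceil.mpr h
  have hkn : ⌈γ * s.card⌉₊ ≤ s.card :=
    Nat.ceil_le.mpr (mul_le_of_le_one_left (Nat.cast_nonneg _) hγ)
  have hm : s.card - ⌈γ * s.card⌉₊ < s.card := by omega
  rw [percentile_eq_getElem hm]
  by_contra! hlt
  have := (s.pairwise_sort (· ≤ ·)).length_sub_le_countP_lt (by rwa [Multiset.length_sort]) hlt
  rw [Multiset.length_sort, ← card_filter_eq_countP_sort s fun x => t < x] at this
  omega

theorem card_filter_percentile_lt_le {γ : ℝ} (s : Multiset ℝ) (hγ : 0 < γ) :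
    ((s.filter fun x => percentile γ s < x).card : ℝ) ≤ γ * s.card := by
  rcases Multiset.empty_or_exists_mem s with rfl | ⟨x, hx⟩
  · simp
  have hs : 0 < s.card := Multiset.card_pos_iff_exists_mem.mpr ⟨x, hx⟩
  have hk : 0 < ⌈γ * s.card⌉₊ := Nat.ceil_pos.mpr (by positivity)
  have hm : s.card - ⌈γ * s.card⌉₊ < s.card := by omega
  suffices (s.filter fun x => percentile γ s < x).card < ⌈γ * s.card⌉₊ from
    (Nat.lt_ceil.mp this).le
  rw [card_filter_eq_countP_sort, percentile_eq_getElem hm]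
  have := (s.pairwise_sort (· ≤ ·)).countP_getElem_lt_le (by rwa [Multiset.length_sort])
  simp only [Multiset.length_sort] at this
  omega

theorem card_rowAbs (A : Matrix (Fin n₁) (Fin n₂) ℝ) (i : Fin n₁) : (rowAbs A i).card = n₂ := by
  simp [rowAbs]

theorem card_filter_rowAbs (A : Matrix (Fin n₁) (Fin n₂) ℝ) (i : Fin n₁) (p : ℝ → Prop)
    [DecidablePred p] :
    ((rowAbs A i).filter p).card = (Finset.univ.filter fun j => p |A i j|).card := by
  rw [rowAbs, ← Multiset.countP_eq_card_filter, Multiset.countP_map, ← Finset.filter_val]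
  rfl

theorem colAbs_eq_rowAbs_transpose (A : Matrix (Fin n₁) (Fin n₂) ℝ) (j : Fin n₂) :
    colAbs A j = rowAbs Aᵀ j :=
  rfl

theorem hardThresh_transpose (γ : ℝ) (A : Matrix (Fin n₁) (Fin n₂) ℝ) :
    hardThresh γ Aᵀ = (hardThresh γ A)ᵀ := by
  ext j i
  simp only [hardThresh, transpose_apply, of_apply, ← colAbs_eq_rowAbs_transpose, and_comm]
  rfl

theorem percentile_rowAbs_add_le {γ γs c : ℝ} {L S : Matrix (Fin n₁) (Fin n₂) ℝ} {i : Fin n₁}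
    (hn₂ : 0 < n₂) (hL : ∀ j, |L i j| ≤ c)
    (hS : ((Finset.univ.filter fun j => S i j ≠ 0).card : ℝ) ≤ γs * n₂)
    (hγ : γs < γ) (hγ1 : γ ≤ 1) :
    percentile γ (rowAbs (L + S) i) ≤ c := by
  apply percentile_le_of_card_filter_lt hγ1
  rw [card_filter_rowAbs, card_rowAbs]
  have hsub : (Finset.univ.filter fun j => c < |(L + S) i j|) ⊆
      Finset.univ.filter fun j => S i j ≠ 0 := by
    refine Finset.monotone_filter_right _ fun j _ hc hS0 => (hL j).not_gt ?_
    rwa [Matrix.add_apply, hS0, add_zero] at hc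
  calc ((Finset.univ.filter fun j => c < |(L + S) i j|).card : ℝ)
      ≤ (Finset.univ.filter fun j => S i j ≠ 0).card := by exact_mod_cast Finset.card_le_card hsub
    _ ≤ γs * n₂ := hS
    _ < γ * n₂ := by gcongr

theorem abs_hardThresh_apply_sub_le {γ c : ℝ} {Y L : Matrix (Fin n₁) (Fin n₂) ℝ} {i : Fin n₁}
    {j : Fin n₂} (hrow : percentile γ (rowAbs Y i) ≤ c) (hcol : percentile γ (colAbs Y j) ≤ c)
    (hL : |L i j| ≤ c) :
    |hardThresh γ Y i j - L i j| ≤ 2 * c := by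
  have hc : 0 ≤ c := (abs_nonneg _).trans hL
  simp only [hardThresh, of_apply]
  split_ifs with h
  · rw [zero_sub, abs_neg]
    linarith
  · have hY : |Y i j| ≤ c := by
      rcases not_and_or.mp h with h | h
      · exact (not_lt.mp h).trans hrow
      · exact (not_lt.mp h).trans hcol
    linarith [abs_sub (Y i j) (L i j)]

theorem abs_hardThresh_add_sub_le {γ γs c : ℝ} {L S : Matrix (Fin n₁) (Fin n₂) ℝ}
    (hL : ∀ i j, |L i j| ≤ c) (hS : SparseSet γs S) (hγ : γs < γ) (hγ1 : γ ≤ 1)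
    (i : Fin n₁) (j : Fin n₂) :
    |(hardThresh γ (L + S) - L) i j| ≤ 2 * c := by
  have hrow := percentile_rowAbs_add_le (Fin.pos j) (hL i) (hS.1 i) hγ hγ1
  have hcol := percentile_rowAbs_add_le (L := Lᵀ) (S := Sᵀ) (Fin.pos i) (fun i' => hL i' j)
    (hS.2 j) hγ hγ1
  rw [← transpose_add, ← colAbs_eq_rowAbs_transpose] at hcol
  exact abs_hardThresh_apply_sub_le hrow hcol (hL i j)

theorem card_filter_hardThresh_add_sub_ne_zero_le {γ γs : ℝ}
    {L S : Matrix (Fin n₁) (Fin n₂) ℝ} {i : Fin n₁}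
    (hS : ((Finset.univ.filter fun j => S i j ≠ 0).card : ℝ) ≤ γs * n₂)
    (hγs : γs ≤ γ) (hγ : 0 < γ) :
    ((Finset.univ.filter fun j => (hardThresh γ (L + S) - L) i j ≠ 0).card : ℝ) ≤ 2 * γ * n₂ := by
  set Y := L + S
  have hsub : (Finset.univ.filter fun j => (hardThresh γ Y - L) i j ≠ 0) ⊆
      (Finset.univ.filter fun j => percentile γ (rowAbs Y i) < |Y i j|) ∪
        Finset.univ.filter fun j => S i j ≠ 0 := by
    simp only [Finset.subset_iff, Finset.mem_union, Finset.mem_filter_univ]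
    intro j
    simp only [hardThresh, Matrix.sub_apply, of_apply]
    split_ifs with h
    · exact fun _ => Or.inl h.1
    · simp only [Y, Matrix.add_apply, add_sub_cancel_left]
      exact Or.inr
  have hrow := card_filter_percentile_lt_le (rowAbs Y i) hγ
  rw [card_filter_rowAbs, card_rowAbs] at hrow
  calc ((Finset.univ.filter fun j => (hardThresh γ Y - L) i j ≠ 0).card : ℝ)
      ≤ (Finset.univ.filter fun j => percentile γ (rowAbs Y i) < |Y i j|).card +
          (Finset.univ.filter fun j => S i j ≠ 0).card := by
        exact_mod_cast (Finset.card_le_card hsub).trans (Finset.card_union_le _ _)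
    _ ≤ γ * n₂ + γs * n₂ := add_le_add hrow hS
    _ ≤ 2 * γ * n₂ := by nlinarith [(Nat.cast_nonneg n₂ : (0 : ℝ) ≤ n₂)]

theorem sparseSet_hardThresh_add_sub {γ γs : ℝ} {L S : Matrix (Fin n₁) (Fin n₂) ℝ}
    (hS : SparseSet γs S) (hγs : γs ≤ γ) (hγ : 0 < γ) :
    SparseSet (2 * γ) (hardThresh γ (L + S) - L) := by
  refine ⟨fun i => card_filter_hardThresh_add_sub_ne_zero_le (hS.1 i) hγs hγ, fun j => ?_⟩
  have := card_filter_hardThresh_add_sub_ne_zero_le (L := Lᵀ) (S := Sᵀ) (i := j) (hS.2 j) hγs hγ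
  rwa [← transpose_add, hardThresh_transpose, ← transpose_sub] at this

theorem sum_sum_ite_ne_zero_le {E : Matrix (Fin n₁) (Fin n₂) ℝ} {c : ℝ}
    (hE : ∀ i, ((Finset.univ.filter fun j => E i j ≠ 0).card : ℝ) ≤ c) {f : Fin n₁ → ℝ}
    (hf : ∀ i, 0 ≤ f i) :
    ∑ i, ∑ j, (if E i j ≠ 0 then f i else 0) ≤ c * ∑ i, f i := by
  rw [Finset.mul_sum]
  refine Finset.sum_le_sum fun i _ => ?_
  rw [← Finset.sum_filter, Finset.sum_const, nsmul_eq_mul]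
  exact mul_le_mul_of_nonneg_right (hE i) (hf i)

theorem abs_dotProduct_mulVec_le_of_sparseSet {E : Matrix (Fin n₁) (Fin n₂) ℝ} {a γ : ℝ}
    (ha : 0 ≤ a) (hγ : 0 ≤ γ) (hE : ∀ i j, |E i j| ≤ a) (hS : SparseSet γ E)
    (u : Fin n₁ → ℝ) (v : Fin n₂ → ℝ) :
    |u ⬝ᵥ (E *ᵥ v)| ≤ a * √(γ * n₂) * √(γ * n₁) * √(u ⬝ᵥ u) * √(v ⬝ᵥ v) := by
  classical
  set f : Fin n₁ × Fin n₂ → ℝ := fun p => if E p.1 p.2 ≠ 0 then |u p.1| else 0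
  set g : Fin n₁ × Fin n₂ → ℝ := fun p => if E p.1 p.2 ≠ 0 then |v p.2| else 0
  have hf : ∑ p, f p ^ 2 ≤ γ * n₂ * (u ⬝ᵥ u) := by
    simp only [f, Fintype.sum_prod_type, apply_ite (· ^ 2), sq_abs, zero_pow two_ne_zero]
    simpa [dotProduct, sq] using sum_sum_ite_ne_zero_le hS.1 fun i => sq_nonneg (u i)
  have hg : ∑ p, g p ^ 2 ≤ γ * n₁ * (v ⬝ᵥ v) := by
    simp only [g, Fintype.sum_prod_type, apply_ite (· ^ 2), sq_abs, zero_pow two_ne_zero]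
    rw [Finset.sum_comm]
    simpa [dotProduct, sq] using
      sum_sum_ite_ne_zero_le (E := Eᵀ) hS.2 fun j => sq_nonneg (v j)
  calc |u ⬝ᵥ (E *ᵥ v)| ≤ ∑ i, ∑ j, |u i * E i j * v j| := by
        simp only [dotProduct, mulVec, Finset.mul_sum]
        refine (Finset.abs_sum_le_sum_abs _ _).trans (Finset.sum_le_sum fun i _ => ?_)
        refine (Finset.abs_sum_le_sum_abs _ _).trans_eq (Finset.sum_congr rfl fun j _ => ?_)
        ring_nf
    _ ≤ a * ∑ p, f p * g p := by
        rw [Fintype.sum_prod_type, Finset.mul_sum]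
        refine Finset.sum_le_sum fun i _ => ?_
        rw [Finset.mul_sum]
        refine Finset.sum_le_sum fun j _ => ?_
        simp only [f, g]
        split_ifs with h
        · rw [abs_mul, abs_mul]
          nlinarith [hE i j, abs_nonneg (u i), abs_nonneg (v j),
            mul_nonneg (abs_nonneg (u i)) (abs_nonneg (v j))]
        · simp [not_not.mp h]
    _ ≤ a * (√(γ * n₂ * (u ⬝ᵥ u)) * √(γ * n₁ * (v ⬝ᵥ v))) := by
        gcongr
        exact (Real.sum_mul_le_sqrt_mul_sqrt _ _ _).trans
          (mul_le_mul (Real.sqrt_le_sqrt hf) (Real.sqrt_le_sqrt hg) (Real.sqrt_nonneg _)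
            (Real.sqrt_nonneg _))
    _ = a * √(γ * n₂) * √(γ * n₁) * √(u ⬝ᵥ u) * √(v ⬝ᵥ v) := by
        rw [Real.sqrt_mul (x := γ * n₂) (by positivity), Real.sqrt_mul (x := γ * n₁) (by positivity)]
        ring

theorem IsThinSVD.rank_le {L : Matrix (Fin n₁) (Fin n₂) ℝ} {U : Matrix (Fin n₁) (Fin r) ℝ}
    {s : Fin r → ℝ} {V : Matrix (Fin n₂) (Fin r) ℝ} (h : IsThinSVD L U s V) : L.rank ≤ r := by
  rw [h.2.2.2.2, Matrix.mul_assoc]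
  exact (rank_mul_le_left _ _).trans ((rank_le_card_width U).trans (Fintype.card_fin r).le)

theorem IsThinSVD.abs_apply_le {L : Matrix (Fin n₁) (Fin n₂) ℝ} {U : Matrix (Fin n₁) (Fin r) ℝ}
    {s : Fin r → ℝ} {V : Matrix (Fin n₂) (Fin r) ℝ} (h : IsThinSVD L U s V) (hr : 0 < r)
    (i : Fin n₁) (j : Fin n₂) :
    |L i j| ≤ s ⟨0, hr⟩ * √(∑ k, U i k ^ 2) * √(∑ k, V j k ^ 2) := by
  obtain ⟨-, -, hanti, hpos, rfl⟩ := h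
  have hentry : (U * diagonal s * Vᵀ) i j = ∑ k, s k * (U i k * V j k) := by
    rw [mul_apply]
    simp only [mul_diagonal, transpose_apply]
    exact Finset.sum_congr rfl fun k _ => by ring
  have hs : ∀ k, |s k| ≤ s ⟨0, hr⟩ := fun k =>
    (abs_of_pos (hpos k)).trans_le (hanti (show (⟨0, hr⟩ : Fin r) ≤ k from Nat.zero_le _))
  calc |(U * diagonal s * Vᵀ) i j| ≤ ∑ k, |s k| * (|U i k| * |V j k|) := by
        rw [hentry]
        refine (Finset.abs_sum_le_sum_abs _ _).trans_eq ?_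
        simp only [abs_mul]
    _ ≤ ∑ k, s ⟨0, hr⟩ * (|U i k| * |V j k|) := by gcongr with k; exact hs k
    _ ≤ s ⟨0, hr⟩ * (√(∑ k, |U i k| ^ 2) * √(∑ k, |V j k| ^ 2)) := by
        rw [← Finset.mul_sum]
        gcongr
        · exact (hpos _).le
        · exact Real.sum_mul_le_sqrt_mul_sqrt _ _ _
    _ = s ⟨0, hr⟩ * √(∑ k, U i k ^ 2) * √(∑ k, V j k ^ 2) := by simp only [sq_abs, mul_assoc]

theorem pos_of_transpose_mul_self_eq_one {n : ℕ} {U : Matrix (Fin n) (Fin r) ℝ}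
    (hU : Uᵀ * U = 1) (hr : 0 < r) : 0 < n := by
  refine Nat.pos_of_ne_zero fun hn => ?_
  subst hn
  simpa [mul_apply] using congrFun (congrFun hU ⟨0, hr⟩) ⟨0, hr⟩

theorem Incoherent.nonneg {μ : ℝ} {U : Matrix (Fin n₁) (Fin r) ℝ} {V : Matrix (Fin n₂) (Fin r) ℝ}
    (h : Incoherent μ U V) (hU : Uᵀ * U = 1) (hr : 0 < r) : 0 ≤ μ := by
  by_contra! hμ
  have hcol : ∀ i, U i ⟨0, hr⟩ = 0 := fun i => by
    have hbound : μ * r / n₁ ≤ 0 :=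
      div_nonpos_of_nonpos_of_nonneg (mul_nonpos_of_nonpos_of_nonneg hμ.le (by positivity))
        (by positivity)
    have hrow := (h.1 i).trans_eq (Real.sqrt_eq_zero'.mpr hbound)
    rw [Real.sqrt_le_left (by norm_num), zero_pow two_ne_zero] at hrow
    have := Finset.single_le_sum (fun k _ => sq_nonneg (U i k)) (Finset.mem_univ ⟨0, hr⟩)
    exact pow_eq_zero_iff two_ne_zero |>.mp (le_antisymm (this.trans hrow) (sq_nonneg _))
  simpa [mul_apply, hcol] using congrFun (congrFun hU ⟨0, hr⟩) ⟨0, hr⟩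

theorem frob_nonneg (A : Matrix (Fin n₁) (Fin n₂) ℝ) : 0 ≤ frob A := Real.sqrt_nonneg _

theorem frob_sq (A : Matrix (Fin n₁) (Fin n₂) ℝ) : frob A ^ 2 = ∑ i, ∑ j, A i j ^ 2 :=
  Real.sq_sqrt (by positivity)

theorem frob_sub_sq_le_of_frob_le {F L₀ L : Matrix (Fin n₁) (Fin n₂) ℝ}
    (h : frob (F - L₀) ≤ frob (F - L)) :
    frob (L₀ - L) ^ 2 ≤ 2 * finner (F - L) (L₀ - L) := by
  have key : 2 * finner (F - L) (L₀ - L) - frob (L₀ - L) ^ 2 =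
      frob (F - L) ^ 2 - frob (F - L₀) ^ 2 := by
    simp only [finner, frob_sq, Finset.mul_sum, ← Finset.sum_sub_distrib, Matrix.sub_apply]
    exact Finset.sum_congr rfl fun i _ => Finset.sum_congr rfl fun j _ => by ring
  nlinarith [pow_le_pow_left₀ (frob_nonneg _) h 2]

theorem finner_eq_sum_orthonormalBasis (E D : Matrix (Fin n₁) (Fin n₂) ℝ)
    (b : OrthonormalBasis (Fin n₂) ℝ (EuclideanSpace ℝ (Fin n₂))) :
    finner E D = ∑ k, (D *ᵥ (b k).ofLp) ⬝ᵥ (E *ᵥ (b k).ofLp) := by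
  have hrow : ∀ (A : Matrix (Fin n₁) (Fin n₂) ℝ) i k,
      (A *ᵥ (b k).ofLp) i = inner ℝ (b k) (WithLp.toLp 2 (A i)) := by
    intro A i k
    simp [EuclideanSpace.inner_eq_star_dotProduct, mulVec]
  simp only [dotProduct, hrow]
  rw [Finset.sum_comm]
  refine Finset.sum_congr rfl fun i _ => ?_
  simp_rw [real_inner_comm (WithLp.toLp 2 (D i))]
  rw [b.sum_inner_mul_inner, EuclideanSpace.inner_eq_star_dotProduct]
  rfl

-- Expand `D` along an eigenbasis `b` of `Dᵀ D`: only `rank D` of the vectors `D b k` are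
-- nonzero, and their squared norms, the eigenvalues, add up to `frob D ^ 2`.
theorem finner_le_of_rank_le {E D : Matrix (Fin n₁) (Fin n₂) ℝ} {B : ℝ} {m : ℕ} (hB : 0 ≤ B)
    (hE : ∀ u v, u ⬝ᵥ (E *ᵥ v) ≤ B * √(u ⬝ᵥ u) * √(v ⬝ᵥ v)) (hD : D.rank ≤ m) :
    finner E D ≤ B * √m * frob D := by
  classical
  set hG := isHermitian_transpose_mul_self D
  set b := hG.eigenvectorBasis
  set ev := hG.eigenvalues
  have hnorm : ∀ k, (D *ᵥ (b k).ofLp) ⬝ᵥ (D *ᵥ (b k).ofLp) = ev k :=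
    hG.mulVec_eigenvectorBasis_dotProduct_self D
  have hev : ∀ k, 0 ≤ ev k := fun k =>
    hnorm k ▸ Finset.sum_nonneg fun i _ => mul_self_nonneg _
  have hterm : ∀ k, (D *ᵥ (b k).ofLp) ⬝ᵥ (E *ᵥ (b k).ofLp) ≤ B * √(ev k) := fun k => by
    simpa [hnorm, OrthonormalBasis.ofLp_dotProduct_self] using hE (D *ᵥ (b k).ofLp) (b k).ofLp
  have hzero : ∀ k, ev k = 0 → (D *ᵥ (b k).ofLp) ⬝ᵥ (E *ᵥ (b k).ofLp) = 0 := fun k hk => by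
    rw [dotProduct_self_eq_zero.mp ((hnorm k).trans hk), zero_dotProduct]
  set T := Finset.univ.filter fun k => ev k ≠ 0
  have hT : (T.card : ℝ) ≤ m := by
    have : T.card = D.rank := by
      rw [← rank_transpose_mul_self, hG.rank_eq_card_non_zero_eigs, Fintype.card_subtype]
    exact_mod_cast this ▸ hD
  have hsum : ∑ k, ev k = frob D ^ 2 := by
    rw [frob, Real.sq_sqrt (by positivity), ← Finset.sum_congr rfl fun k _ => hnorm k,
      ← finner_eq_sum_orthonormalBasis D D b]
    simp only [finner, sq]
  calc finner E D = ∑ k ∈ T, (D *ᵥ (b k).ofLp) ⬝ᵥ (E *ᵥ (b k).ofLp) := by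
        rw [finner_eq_sum_orthonormalBasis E D b]
        exact (Finset.sum_filter_of_ne fun k _ h => mt (hzero k) h).symm
    _ ≤ B * ∑ k ∈ T, 1 * √(ev k) := by
        simpa [Finset.mul_sum] using Finset.sum_le_sum fun k _ => hterm k
    _ ≤ B * (√(∑ k ∈ T, 1 ^ 2) * √(∑ k ∈ T, √(ev k) ^ 2)) := by
        gcongr; exact Real.sum_mul_le_sqrt_mul_sqrt _ _ _
    _ ≤ B * (√m * frob D) := by
        gcongr
        · simpa using hT
        · rw [← Real.sqrt_sq (frob_nonneg D), ← hsum]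
          refine Real.sqrt_le_sqrt ?_
          simp only [Real.sq_sqrt (hev _)]
          exact Finset.sum_le_sum_of_subset_of_nonneg (Finset.filter_subset _ _)
            fun k _ _ => hev k
    _ = B * √m * frob D := by ring

theorem dotProduct_mulVec_hardThresh_add_sub_le {μ γ γs : ℝ} {L S : Matrix (Fin n₁) (Fin n₂) ℝ}
    {U : Matrix (Fin n₁) (Fin r) ℝ} {s : Fin r → ℝ} {V : Matrix (Fin n₂) (Fin r) ℝ}
    (hr : 0 < r) (hSVD : IsThinSVD L U s V) (hinc : Incoherent μ U V) (hS : SparseSet γs S)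
    (hγ0 : 0 < γ) (hγ1 : γ ≤ 1) (hγ : γs < γ) (u : Fin n₁ → ℝ) (v : Fin n₂ → ℝ) :
    u ⬝ᵥ ((hardThresh γ (L + S) - L) *ᵥ v) ≤
      4 * γ * μ * r * s ⟨0, hr⟩ * √(u ⬝ᵥ u) * √(v ⬝ᵥ v) := by
  set σ₁ := s ⟨0, hr⟩
  have hn₁ : (0 : ℝ) < n₁ := by exact_mod_cast pos_of_transpose_mul_self_eq_one hSVD.1 hr
  have hn₂ : (0 : ℝ) < n₂ := by exact_mod_cast pos_of_transpose_mul_self_eq_one hSVD.2.1 hr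
  have hμr : 0 ≤ μ * r := mul_nonneg (hinc.nonneg hSVD.1 hr) r.cast_nonneg
  have hσ₁ : 0 < σ₁ := hSVD.2.2.2.1 _
  have hL : ∀ i j, |L i j| ≤ σ₁ * √(μ * r / n₁) * √(μ * r / n₂) := fun i j =>
    (hSVD.abs_apply_le hr i j).trans (by gcongr σ₁ * ?_ * ?_; exacts [hinc.1 i, hinc.2 j])
  have hconst : 2 * (σ₁ * √(μ * r / n₁) * √(μ * r / n₂)) * √(2 * γ * n₂) * √(2 * γ * n₁) =
      4 * γ * μ * r * σ₁ := by
    calc _ = 2 * σ₁ * (√(μ * r / n₁) * √(2 * γ * n₁)) * (√(μ * r / n₂) * √(2 * γ * n₂)) := by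
          ring
      _ = 4 * γ * μ * r * σ₁ := by
          rw [Real.sqrt_div_mul_sqrt_mul hμr hn₁, Real.sqrt_div_mul_sqrt_mul hμr hn₂, mul_assoc,
            Real.mul_self_sqrt (by positivity)]
          ring
  exact hconst ▸ (le_abs_self _).trans (abs_dotProduct_mulVec_le_of_sparseSet (by positivity)
    (by positivity) (abs_hardThresh_add_sub_le hL hS hγ hγ1)
    (sparseSet_hardThresh_add_sub hS hγ.le hγ0) u v)

end RPCA

/-- quality of the initialization, fully observed case. -/
theorem initialization_fully_observed
    {n₁ n₂ r : ℕ} (hr : 0 < r)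
    (μc γ γs : ℝ)
    (Lstar Sstar Y L0 : Matrix (Fin n₁) (Fin n₂) ℝ)
    (Ustar : Matrix (Fin n₁) (Fin r) ℝ) (sstar : Fin r → ℝ)
    (Vstar : Matrix (Fin n₂) (Fin r) ℝ)
    (hSVD : RPCA.IsThinSVD Lstar Ustar sstar Vstar)
    (hinc : RPCA.Incoherent μc Ustar Vstar)
    (hS : RPCA.SparseSet γs Sstar)
    (hY : Y = Lstar + Sstar)
    (hγ0 : 0 < γ) (hγ1 : γ < 1) (hγ : γ > γs)
    (hL0 : RPCA.IsBestRankApprox r (RPCA.hardThresh γ Y) L0) :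
    RPCA.frob (L0 - Lstar) ≤
      8 * γ * μc * r * Real.sqrt (2 * r) * sstar ⟨0, hr⟩ := by
  subst hY
  have hμ : 0 ≤ μc := hinc.nonneg hSVD.1 hr
  have hσ₁ : 0 < sstar ⟨0, hr⟩ := hSVD.2.2.2.1 _
  have hE := RPCA.dotProduct_mulVec_hardThresh_add_sub_le hr hSVD hinc hS hγ0 hγ1.le hγ
  have hrank : (L0 - Lstar).rank ≤ 2 * r := by
    linarith [Matrix.rank_sub_le L0 Lstar, hL0.1, hSVD.rank_le]
  have hopt := RPCA.frob_sub_sq_le_of_frob_le (hL0.2 Lstar hSVD.rank_le)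
  have hinner := RPCA.finner_le_of_rank_le (by positivity) hE hrank
  push_cast at hinner
  have hK : 0 ≤ 8 * γ * μc * r * √(2 * r) * sstar ⟨0, hr⟩ := by positivity
  nlinarith [RPCA.frob_nonneg (L0 - Lstar)]
end
end

section
/- Retraction error bound, projective case: let L ∈ ℝ^{n₁×n₂} have rank r, and let X lie in the tangent space T_L of the rank-r manifold at L with spectral norm ‖X‖ < σ_r(L). Then any best rank-r approximation R⁽¹⁾_L(X) of L + X in Frobenius norm satisfies ‖R⁽¹⁾_L(X) − (L + X)‖_F ≤ ‖X‖_F² / (2(σ_r(L) − ‖X‖)). -/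
open Matrix MeasureTheory ProbabilityTheory Filter
open scoped BigOperators ENNReal NNReal

noncomputable section

namespace Aux
variable {m n p r : ℕ}

def fsq (A : Matrix (Fin m) (Fin n) ℝ) : ℝ := ∑ i, ∑ j, A i j ^ 2

lemma fsq_nonneg (A : Matrix (Fin m) (Fin n) ℝ) : 0 ≤ fsq A :=
  Finset.sum_nonneg fun _ _ => Finset.sum_nonneg fun _ _ => sq_nonneg _

def ip (A B : Matrix (Fin m) (Fin n) ℝ) : ℝ := Matrix.trace (A * Bᵀ)

lemma fsq_eq_ip (A : Matrix (Fin m) (Fin n) ℝ) : fsq A = ip A A := by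
  simp [fsq, ip, Matrix.trace, Matrix.mul_apply, Matrix.diag, sq]

lemma ip_comm (A B : Matrix (Fin m) (Fin n) ℝ) : ip A B = ip B A := by
  unfold ip
  rw [← Matrix.trace_transpose (A * Bᵀ), Matrix.transpose_mul, Matrix.transpose_transpose]

lemma ip_mul_left (U : Matrix (Fin m) (Fin p) ℝ) (A : Matrix (Fin p) (Fin n) ℝ)
    (B : Matrix (Fin m) (Fin n) ℝ) : ip (U * A) B = ip A (Uᵀ * B) := by
  unfold ip
  rw [Matrix.transpose_mul, Matrix.transpose_transpose, Matrix.mul_assoc,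
    Matrix.trace_mul_comm, Matrix.mul_assoc]

lemma ip_mul_right (A : Matrix (Fin m) (Fin p) ℝ) (C : Matrix (Fin p) (Fin n) ℝ)
    (B : Matrix (Fin m) (Fin n) ℝ) : ip (A * C) B = ip A (B * Cᵀ) := by
  unfold ip
  rw [Matrix.transpose_mul, Matrix.transpose_transpose, Matrix.mul_assoc]

lemma fsq_sub (A B : Matrix (Fin m) (Fin n) ℝ) :
    fsq (A - B) = fsq A - 2 * ip A B + fsq B := by
  simp only [fsq_eq_ip, ip, Matrix.transpose_sub, Matrix.sub_mul, Matrix.mul_sub,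
    Matrix.trace_sub]
  have : Matrix.trace (B * Aᵀ) = Matrix.trace (A * Bᵀ) := (ip_comm B A)
  rw [this]; ring

lemma fsq_split_left (U : Matrix (Fin m) (Fin r) ℝ) (hU : Uᵀ * U = 1)
    (Y : Matrix (Fin m) (Fin n) ℝ) :
    fsq (U * (Uᵀ * Y)) + fsq (Y - U * (Uᵀ * Y)) = fsq Y := by
  have hred : Uᵀ * (U * (Uᵀ * Y)) = Uᵀ * Y := by
    rw [← Matrix.mul_assoc, hU, Matrix.one_mul]
  have hPP : fsq (U * (Uᵀ * Y)) = ip Y (U * (Uᵀ * Y)) := by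
    rw [fsq_eq_ip, ip_mul_left, hred, ip_comm Y, ip_mul_left U (Uᵀ * Y) Y]
  rw [fsq_sub, hPP]; ring

lemma fsq_split_right (V : Matrix (Fin n) (Fin r) ℝ) (hV : Vᵀ * V = 1)
    (Y : Matrix (Fin m) (Fin n) ℝ) :
    fsq (Y * (V * Vᵀ)) + fsq (Y - Y * (V * Vᵀ)) = fsq Y := by
  have hred : Y * (V * Vᵀ) * (V * Vᵀ)ᵀ = Y * (V * Vᵀ) := by
    rw [Matrix.transpose_mul, Matrix.transpose_transpose]
    calc Y * (V * Vᵀ) * (V * Vᵀ) = Y * (V * ((Vᵀ * V) * Vᵀ)) := by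
          simp only [Matrix.mul_assoc]
      _ = Y * (V * Vᵀ) := by rw [hV, Matrix.one_mul]
  have hPP : fsq (Y * (V * Vᵀ)) = ip Y (Y * (V * Vᵀ)) := by
    rw [fsq_eq_ip, ip_mul_right, hred]
  rw [fsq_sub, hPP]; ring

lemma fsq_mul_left_proj (U : Matrix (Fin m) (Fin r) ℝ) (hU : Uᵀ * U = 1)
    (Y : Matrix (Fin m) (Fin n) ℝ) : fsq (U * (Uᵀ * Y)) ≤ fsq Y := by
  have h1 := fsq_split_left U hU Y
  have h2 := fsq_nonneg (Y - U * (Uᵀ * Y))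
  linarith

lemma fsq_mulV (V : Matrix (Fin n) (Fin r) ℝ) (hV : Vᵀ * V = 1)
    (N : Matrix (Fin m) (Fin n) ℝ) : fsq (N * V) = fsq (N * (V * Vᵀ)) := by
  have hred : N * (V * Vᵀ) * (V * Vᵀ)ᵀ = N * (V * Vᵀ) := by
    rw [Matrix.transpose_mul, Matrix.transpose_transpose]
    calc N * (V * Vᵀ) * (V * Vᵀ) = N * (V * ((Vᵀ * V) * Vᵀ)) := by
          simp only [Matrix.mul_assoc]
      _ = N * (V * Vᵀ) := by rw [hV, Matrix.one_mul]
  rw [fsq_eq_ip, fsq_eq_ip, ip_mul_right N V (N * V),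
    ip_mul_right N (V * Vᵀ) (N * (V * Vᵀ)), hred, Matrix.mul_assoc]

lemma fsq_Ut (U : Matrix (Fin m) (Fin r) ℝ) (hU : Uᵀ * U = 1)
    (N : Matrix (Fin m) (Fin n) ℝ) : fsq (Uᵀ * N) = fsq (U * (Uᵀ * N)) := by
  have hred : Uᵀ * (U * (Uᵀ * N)) = Uᵀ * N := by
    rw [← Matrix.mul_assoc, hU, Matrix.one_mul]
  rw [fsq_eq_ip (U * _), ip_mul_left, hred, fsq_eq_ip]

lemma fsq_mul_le (A : Matrix (Fin m) (Fin n) ℝ) (B : Matrix (Fin n) (Fin p) ℝ) :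
    fsq (A * B) ≤ fsq A * fsq B := by
  unfold fsq
  calc ∑ i, ∑ j, (A * B) i j ^ 2
      ≤ ∑ i, ∑ j, (∑ k, A i k ^ 2) * (∑ k, B k j ^ 2) := by
        apply Finset.sum_le_sum; intro i _
        apply Finset.sum_le_sum; intro j _
        simpa [Matrix.mul_apply] using
          Finset.sum_mul_sq_le_sq_mul_sq Finset.univ (fun k => A i k) (fun k => B k j)
    _ = (∑ i, ∑ k, A i k ^ 2) * (∑ j, ∑ k, B k j ^ 2) := by
        rw [← Finset.sum_mul_sum]
    _ = (∑ i, ∑ k, A i k ^ 2) * (∑ k, ∑ j, B k j ^ 2) := by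
        congr 1
        exact Finset.sum_comm

end Aux

namespace Aux2
variable {m n p r : ℕ}

def nsq (v : Fin n → ℝ) : ℝ := ∑ i, v i ^ 2
def nrm (v : Fin n → ℝ) : ℝ := Real.sqrt (nsq v)

lemma nsq_nonneg (v : Fin n → ℝ) : 0 ≤ nsq v :=
  Finset.sum_nonneg fun _ _ => sq_nonneg _

lemma nrm_nonneg (v : Fin n → ℝ) : 0 ≤ nrm v := Real.sqrt_nonneg _

lemma nrm_sq (v : Fin n → ℝ) : nrm v ^ 2 = nsq v := Real.sq_sqrt (nsq_nonneg v)

lemma nsq_eq_dot (v : Fin n → ℝ) : nsq v = v ⬝ᵥ v := by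
  simp [nsq, dotProduct, sq]

lemma nsq_add (a b : Fin n → ℝ) : nsq (a + b) = nsq a + 2 * (a ⬝ᵥ b) + nsq b := by
  simp only [nsq, dotProduct, Pi.add_apply]
  rw [Finset.mul_sum, ← Finset.sum_add_distrib, ← Finset.sum_add_distrib]
  congr 1; funext i; ring

lemma dot_le_nrm (a b : Fin n → ℝ) : a ⬝ᵥ b ≤ nrm a * nrm b := by
  have h := Finset.sum_mul_sq_le_sq_mul_sq Finset.univ a b
  have h2 : a ⬝ᵥ b ≤ |a ⬝ᵥ b| := le_abs_self _
  have h3 : |a ⬝ᵥ b| = Real.sqrt ((a ⬝ᵥ b) ^ 2) := (Real.sqrt_sq_eq_abs _).symm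
  calc a ⬝ᵥ b ≤ Real.sqrt ((a ⬝ᵥ b) ^ 2) := by rw [← h3]; exact h2
    _ ≤ Real.sqrt (nsq a * nsq b) := by
        apply Real.sqrt_le_sqrt
        simpa [dotProduct, nsq] using h
    _ = nrm a * nrm b := Real.sqrt_mul (nsq_nonneg a) _

lemma nrm_add_le (a b : Fin n → ℝ) : nrm (a + b) ≤ nrm a + nrm b := by
  have h : nsq (a + b) ≤ (nrm a + nrm b) ^ 2 := by
    have := dot_le_nrm a b
    rw [nsq_add]
    nlinarith [nrm_sq a, nrm_sq b]
  calc nrm (a + b) = Real.sqrt (nsq (a + b)) := rfl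
    _ ≤ Real.sqrt ((nrm a + nrm b) ^ 2) := Real.sqrt_le_sqrt h
    _ = nrm a + nrm b := Real.sqrt_sq (add_nonneg (nrm_nonneg a) (nrm_nonneg b))

lemma nrm_smul (c : ℝ) (v : Fin n → ℝ) : nrm (c • v) = |c| * nrm v := by
  unfold nrm nsq
  simp only [Pi.smul_apply, smul_eq_mul, mul_pow, ← Finset.mul_sum]
  rw [Real.sqrt_mul (sq_nonneg c), Real.sqrt_sq_eq_abs]

lemma nsq_mulVec_dot (A : Matrix (Fin m) (Fin n) ℝ) (v : Fin n → ℝ) :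
    nsq (A *ᵥ v) = ((Aᵀ * A) *ᵥ v) ⬝ᵥ v := by
  rw [nsq_eq_dot, dotProduct_comm, Matrix.dotProduct_mulVec, ← Matrix.mulVec_transpose,
    Matrix.mulVec_mulVec]

lemma nsq_mulVec_iso (V : Matrix (Fin n) (Fin r) ℝ) (hV : Vᵀ * V = 1) (v : Fin r → ℝ) :
    nsq (V *ᵥ v) = nsq v := by
  rw [nsq_mulVec_dot, hV, Matrix.one_mulVec, nsq_eq_dot, dotProduct_comm]

lemma nsq_transpose_le (U : Matrix (Fin m) (Fin r) ℝ) (hU : Uᵀ * U = 1) (w : Fin m → ℝ) :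
    nsq (Uᵀ *ᵥ w) ≤ nsq w := by
  set x := Uᵀ *ᵥ w with hx
  set Pw := U *ᵥ x with hPw
  have hiso : nsq Pw = nsq x := nsq_mulVec_iso U hU x
  have hdot : Pw ⬝ᵥ w = nsq x := by
    rw [hPw, dotProduct_comm, Matrix.dotProduct_mulVec, ← Matrix.mulVec_transpose, hx,
      nsq_eq_dot, dotProduct_comm]
  have hsplit : w = Pw + (w - Pw) := by ring
  have : nsq w = nsq Pw + 2 * (Pw ⬝ᵥ (w - Pw)) + nsq (w - Pw) := by
    calc nsq w = nsq (Pw + (w - Pw)) := by rw [← hsplit]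
      _ = _ := nsq_add _ _
  have hcross : Pw ⬝ᵥ (w - Pw) = 0 := by
    have : Pw ⬝ᵥ (w - Pw) = Pw ⬝ᵥ w - Pw ⬝ᵥ Pw := by
      simp [dotProduct, Finset.mul_sum, Finset.sum_sub_distrib, mul_sub]
    rw [this, hdot, ← nsq_eq_dot, hiso]; ring
  have h4 := nsq_nonneg (w - Pw)
  have h5 : nsq w = nsq x + nsq (w - Pw) := by rw [this, hcross, hiso]; ring
  linarith

lemma nrm_mulVec_le_fsq (A : Matrix (Fin m) (Fin n) ℝ) (v : Fin n → ℝ) :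
    nsq (A *ᵥ v) ≤ (∑ i, ∑ j, A i j ^ 2) * nsq v := by
  unfold nsq
  calc ∑ i, (A *ᵥ v) i ^ 2
      ≤ ∑ i, (∑ j, A i j ^ 2) * (∑ j, v j ^ 2) := by
        apply Finset.sum_le_sum; intro i _
        simpa [Matrix.mulVec, dotProduct] using
          Finset.sum_mul_sq_le_sq_mul_sq Finset.univ (fun j => A i j) v
    _ = (∑ i, ∑ j, A i j ^ 2) * (∑ j, v j ^ 2) := by rw [Finset.sum_mul]

lemma nsq_diagonal_ge (s : Fin r → ℝ) (c : ℝ) (hc : 0 ≤ c) (hs : ∀ k, c ≤ s k)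
    (v : Fin r → ℝ) : c ^ 2 * nsq v ≤ nsq ((Matrix.diagonal s) *ᵥ v) := by
  unfold nsq
  rw [Finset.mul_sum]
  apply Finset.sum_le_sum; intro k _
  rw [Matrix.mulVec_diagonal, mul_pow]
  have : c ^ 2 ≤ s k ^ 2 := by nlinarith [hs k]
  nlinarith [sq_nonneg (v k)]

end Aux2



lemma sqrt_amgm_div {x y X2 e : ℝ} (hx : 0 ≤ x) (hy : 0 ≤ y) (hxy : x + y ≤ X2)
    (he : 0 < e) : Real.sqrt (x * (y / e ^ 2)) ≤ X2 / (2 * e) := by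
  have hq : x * (y / e ^ 2) = x * y / e ^ 2 := by ring
  have hsq : Real.sqrt (x * y / e ^ 2) = Real.sqrt (x * y) / e := by
    rw [Real.sqrt_div (mul_nonneg hx hy), Real.sqrt_sq (le_of_lt he)]
  have hAM : Real.sqrt (x * y) ≤ X2 / 2 := by
    have h1 : Real.sqrt (x * y) = Real.sqrt x * Real.sqrt y := Real.sqrt_mul hx _
    nlinarith [sq_nonneg (Real.sqrt x - Real.sqrt y), Real.sq_sqrt hx, Real.sq_sqrt hy,
      Real.sqrt_nonneg x, Real.sqrt_nonneg y]
  rw [hq, hsq, div_le_div_iff₀ he (by linarith : (0:ℝ) < 2 * e)]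
  nlinarith [Real.sqrt_nonneg (x * y)]

lemma frob_eq_fsq {m n : ℕ} (A : Matrix (Fin m) (Fin n) ℝ) :
    RPCA.frob A = Real.sqrt (Aux.fsq A) := rfl

/-- retraction error bound, projective case. -/
theorem projective_retraction_bound
    {n₁ n₂ r : ℕ} (hr : 0 < r)
    (L X : Matrix (Fin n₁) (Fin n₂) ℝ)
    (U : Matrix (Fin n₁) (Fin r) ℝ) (s : Fin r → ℝ) (V : Matrix (Fin n₂) (Fin r) ℝ)
    (hSVD : RPCA.IsThinSVD L U s V)
    (hTan : X = RPCA.tangentProj U V X)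
    (hXnorm : RPCA.spec X < s ⟨r - 1, Nat.sub_lt hr Nat.one_pos⟩) :
    ∀ Z : Matrix (Fin n₁) (Fin n₂) ℝ, RPCA.IsBestRankApprox r (L + X) Z →
      RPCA.frob (Z - (L + X)) ≤
        RPCA.frob X ^ 2 /
          (2 * (s ⟨r - 1, Nat.sub_lt hr Nat.one_pos⟩ - RPCA.spec X)) := by
  intro Z hZ
  obtain ⟨hUU, hVV, hanti, hpos, hL⟩ := hSVD
  classical
  set σr := s ⟨r - 1, Nat.sub_lt hr Nat.one_pos⟩ with hσr
  set M := L + X with hMdef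
  set ε := σr - RPCA.spec X with hεdef
  have hεpos : 0 < ε := sub_pos.mpr hXnorm
  -- spectral norm operator bound
  have hBdd : BddAbove {c | ∃ v : Fin n₂ → ℝ, (∑ j, (v j) ^ 2) = 1 ∧
      c = Real.sqrt (∑ i, (∑ j, X i j * v j) ^ 2)} := by
    refine ⟨Real.sqrt (Aux.fsq X), ?_⟩
    rintro c ⟨v, hv, rfl⟩
    apply Real.sqrt_le_sqrt
    have h := Aux2.nrm_mulVec_le_fsq X v
    have hv' : Aux2.nsq v = 1 := hv
    have hXv : (∑ i, (∑ j, X i j * v j) ^ 2) = Aux2.nsq (X *ᵥ v) := by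
      simp [Aux2.nsq, Matrix.mulVec, dotProduct]
    rw [hXv]
    calc Aux2.nsq (X *ᵥ v) ≤ (∑ i, ∑ j, X i j ^ 2) * Aux2.nsq v := h
      _ = Aux.fsq X := by rw [hv', mul_one]; rfl
  have hmem : ∀ v : Fin n₂ → ℝ, Aux2.nsq v = 1 → Aux2.nrm (X *ᵥ v) ≤ RPCA.spec X := by
    intro v hv
    apply le_csSup hBdd
    exact ⟨v, hv, by simp [Aux2.nrm, Aux2.nsq, Matrix.mulVec, dotProduct]⟩
  have hnsq_zero : ∀ {k : ℕ} (v : Fin k → ℝ), Aux2.nsq v = 0 → v = 0 := by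
    intro k v hv
    funext i
    have h1 : ∀ j ∈ Finset.univ, (0:ℝ) ≤ v j ^ 2 := fun j _ => sq_nonneg _
    have h2 := (Finset.sum_eq_zero_iff_of_nonneg h1).mp hv i (Finset.mem_univ i)
    have := sq_eq_zero_iff.mp h2
    simpa using this
  have hspec : ∀ w : Fin n₂ → ℝ, Aux2.nrm (X *ᵥ w) ≤ RPCA.spec X * Aux2.nrm w := by
    intro w
    by_cases hw : Aux2.nrm w = 0
    · have hw0 : w = 0 := by
        apply hnsq_zero
        have h5 := Aux2.nrm_sq w
        rw [hw] at h5
        simpa using h5.symm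
      rw [hw0]
      simp [Aux2.nrm, Aux2.nsq, Matrix.mulVec_zero]
    · have ht : 0 < Aux2.nrm w := lt_of_le_of_ne (Aux2.nrm_nonneg w) (Ne.symm hw)
      set t := Aux2.nrm w with htdef
      have hu : Aux2.nsq (t⁻¹ • w) = 1 := by
        unfold Aux2.nsq
        simp only [Pi.smul_apply, smul_eq_mul, mul_pow, ← Finset.mul_sum]
        have h6 : (∑ i, w i ^ 2) = t ^ 2 := by
          rw [htdef, Aux2.nrm_sq]; rfl
        rw [h6]
        field_simp
      have hm := hmem (t⁻¹ • w) hu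
      rw [Matrix.mulVec_smul, Aux2.nrm_smul, abs_of_pos (inv_pos.mpr ht)] at hm
      calc Aux2.nrm (X *ᵥ w) = t * (t⁻¹ * Aux2.nrm (X *ᵥ w)) := by field_simp
        _ ≤ t * RPCA.spec X := mul_le_mul_of_nonneg_left hm (le_of_lt ht)
        _ = RPCA.spec X * t := mul_comm _ _
  -- the middle matrix G
  set G := Uᵀ * (M * V) with hGdef
  have hLV : L * V = U * Matrix.diagonal s := by
    rw [hL, Matrix.mul_assoc, Matrix.mul_assoc, hVV, Matrix.mul_one]
  have hUtL : Uᵀ * L = Matrix.diagonal s * Vᵀ := by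
    rw [hL, ← Matrix.mul_assoc, ← Matrix.mul_assoc, hUU, Matrix.one_mul]
  have hGform : G = Matrix.diagonal s + Uᵀ * (X * V) := by
    rw [hGdef, hMdef, Matrix.add_mul, Matrix.mul_add, hLV, ← Matrix.mul_assoc, hUU,
      Matrix.one_mul]
  -- lower bound on G
  have hσpos : 0 < σr := hpos _
  have hsge : ∀ k, σr ≤ s k := by
    intro k
    apply hanti
    rw [Fin.le_def]
    show k.1 ≤ r - 1
    have := k.isLt
    omega
  have hGlow : ∀ v : Fin r → ℝ, ε * Aux2.nrm v ≤ Aux2.nrm (G *ᵥ v) := by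
    intro v
    have hd : σr * Aux2.nrm v ≤ Aux2.nrm (Matrix.diagonal s *ᵥ v) := by
      have h1 := Aux2.nsq_diagonal_ge s σr (le_of_lt hσpos) hsge v
      have h2 : σr * Aux2.nrm v = Real.sqrt (σr ^ 2 * Aux2.nsq v) := by
        rw [Real.sqrt_mul (sq_nonneg _), Real.sqrt_sq (le_of_lt hσpos)]; rfl
      rw [h2]
      exact Real.sqrt_le_sqrt h1
    have hA : Aux2.nrm ((Uᵀ * (X * V)) *ᵥ v) ≤ RPCA.spec X * Aux2.nrm v := by
      have e1 : (Uᵀ * (X * V)) *ᵥ v = Uᵀ *ᵥ (X *ᵥ (V *ᵥ v)) := by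
        rw [Matrix.mulVec_mulVec, Matrix.mulVec_mulVec, Matrix.mul_assoc]
      rw [e1]
      have h2 : Aux2.nrm (Uᵀ *ᵥ (X *ᵥ (V *ᵥ v))) ≤ Aux2.nrm (X *ᵥ (V *ᵥ v)) :=
        Real.sqrt_le_sqrt (Aux2.nsq_transpose_le U hUU _)
      have h3 := hspec (V *ᵥ v)
      have h4 : Aux2.nrm (V *ᵥ v) = Aux2.nrm v := by
        unfold Aux2.nrm; rw [Aux2.nsq_mulVec_iso V hVV]
      rw [h4] at h3
      exact le_trans h2 h3
    have htri : Aux2.nrm (Matrix.diagonal s *ᵥ v) ≤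
        Aux2.nrm (G *ᵥ v) + Aux2.nrm ((Uᵀ * (X * V)) *ᵥ v) := by
      have e2 : Matrix.diagonal s *ᵥ v = G *ᵥ v + (-(Uᵀ * (X * V))) *ᵥ v := by
        rw [Matrix.neg_mulVec, hGform, Matrix.add_mulVec]
        abel
      rw [e2]
      have h5 := Aux2.nrm_add_le (G *ᵥ v) ((-(Uᵀ * (X * V))) *ᵥ v)
      have e3 : Aux2.nrm ((-(Uᵀ * (X * V))) *ᵥ v) = Aux2.nrm ((Uᵀ * (X * V)) *ᵥ v) := by
        rw [Matrix.neg_mulVec]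
        unfold Aux2.nrm Aux2.nsq
        simp
      rw [e3] at h5
      exact h5
    rw [hεdef]
    nlinarith [Aux2.nrm_nonneg v]
  -- G is invertible
  have hdet : IsUnit G.det := by
    rw [isUnit_iff_ne_zero]
    intro hdet0
    obtain ⟨v, hv0, hGv⟩ := (Matrix.exists_mulVec_eq_zero_iff).mpr hdet0
    have hnv : 0 < Aux2.nsq v := by
      rcases Function.ne_iff.mp hv0 with ⟨i, hi⟩
      have h1 : v i ^ 2 ≤ Aux2.nsq v :=
        Finset.single_le_sum (f := fun j => v j ^ 2) (fun j _ => sq_nonneg _)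
          (Finset.mem_univ i)
      have h2 : 0 < v i ^ 2 := by
        have : v i ≠ 0 := by simpa using hi
        positivity
      linarith
    have hnrm : 0 < Aux2.nrm v := Real.sqrt_pos.mpr hnv
    have h3 := hGlow v
    rw [hGv] at h3
    have h0 : Aux2.nrm (0 : Fin r → ℝ) = 0 := by simp [Aux2.nrm, Aux2.nsq]
    rw [h0] at h3
    nlinarith
  have hGH : G * G⁻¹ = 1 := Matrix.mul_nonsing_inv G hdet
  have hHG : G⁻¹ * G = 1 := Matrix.nonsing_inv_mul G hdet
  set H := G⁻¹ with hHdef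
  -- the competitor matrix W
  set W := M * (V * (H * (Uᵀ * M))) with hWdef
  have hrankW : W.rank ≤ r := by
    calc W.rank ≤ (V * (H * (Uᵀ * M))).rank := Matrix.rank_mul_le_right _ _
      _ ≤ (H * (Uᵀ * M)).rank := Matrix.rank_mul_le_right _ _
      _ ≤ Fintype.card (Fin r) := Matrix.rank_le_card_height _
      _ = r := Fintype.card_fin r
  -- C and B
  set C := M * V - U * G with hCdef
  set B := Uᵀ * M - G * Vᵀ with hBdef
  clear_value σr M ε G H W C B
  have hC : C = X * V - U * (Uᵀ * (X * V)) := by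
    rw [hCdef, hMdef, Matrix.add_mul, hLV, hGform, Matrix.mul_add]
    abel
  have hB : B = Uᵀ * X - Uᵀ * X * (V * Vᵀ) := by
    rw [hBdef, hMdef, Matrix.mul_add, hUtL, hGform, Matrix.add_mul]
    have e1 : Uᵀ * (X * V) * Vᵀ = Uᵀ * X * (V * Vᵀ) := by
      simp only [Matrix.mul_assoc]
    rw [e1]
    abel
  -- tangency of M
  have hXt : X = U * (Uᵀ * X) + X * (V * Vᵀ) - U * (Uᵀ * (X * (V * Vᵀ))) := by
    have h := hTan
    unfold RPCA.tangentProj at h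
    simp only [Matrix.mul_assoc] at h
    exact h
  have hMtan : M = U * (Uᵀ * M) + M * (V * Vᵀ) - U * (Uᵀ * (M * (V * Vᵀ))) := by
    have hLP : U * (Uᵀ * L) = L := by
      rw [hUtL, hL]; simp only [Matrix.mul_assoc]
    have hLQ : L * (V * Vᵀ) = L := by
      rw [hL]
      calc U * Matrix.diagonal s * Vᵀ * (V * Vᵀ)
          = U * Matrix.diagonal s * (Vᵀ * V * Vᵀ) := by simp only [Matrix.mul_assoc]
        _ = U * Matrix.diagonal s * Vᵀ := by rw [hVV, Matrix.one_mul]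
    rw [hMdef]
    simp only [Matrix.mul_add, Matrix.add_mul]
    rw [hLQ, hLP]
    nth_rewrite 1 [hXt]
    abel
  -- the key identity
  have hHB : H * B = H * (Uᵀ * M) - Vᵀ := by
    rw [hBdef, Matrix.mul_sub, ← Matrix.mul_assoc H G Vᵀ, hHG, Matrix.one_mul]
  have hGHU : G * (H * (Uᵀ * M)) = Uᵀ * M := by
    rw [← Matrix.mul_assoc, hGH, Matrix.one_mul]
  have hGVt : G * Vᵀ = Uᵀ * (M * (V * Vᵀ)) := by
    rw [hGdef]
    simp only [Matrix.mul_assoc]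
  have hkey : M - W = -(C * (H * B)) := by
    rw [hHB, hCdef]
    simp only [Matrix.mul_sub, Matrix.sub_mul, Matrix.mul_assoc]
    rw [hGHU, hGVt]
    rw [show M * (V * (H * (Uᵀ * M))) = W from hWdef.symm]
    nth_rewrite 1 [hMtan]
    abel
  -- norms
  have hfrob_neg : ∀ (A : Matrix (Fin n₁) (Fin n₂) ℝ), RPCA.frob (-A) = RPCA.frob A := by
    intro A
    unfold RPCA.frob
    congr 1
    apply Finset.sum_congr rfl; intro i _
    apply Finset.sum_congr rfl; intro j _
    simp
  have hfrob_sub_comm : RPCA.frob (Z - M) = RPCA.frob (M - Z) := by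
    have e : Z - M = -(M - Z) := by abel
    rw [e, hfrob_neg]
  -- column bound for H * B
  have hHB_bound : Aux.fsq (H * B) ≤ Aux.fsq B / ε ^ 2 := by
    have hcol : ∀ b : Fin r → ℝ, Aux2.nsq (H *ᵥ b) ≤ Aux2.nsq b / ε ^ 2 := by
      intro b
      have h1 := hGlow (H *ᵥ b)
      have h2 : G *ᵥ (H *ᵥ b) = b := by
        rw [Matrix.mulVec_mulVec, hGH, Matrix.one_mulVec]
      rw [h2] at h1
      have h3 : Aux2.nrm (H *ᵥ b) ≤ Aux2.nrm b / ε := by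
        rw [le_div_iff₀ hεpos, mul_comm]
        exact h1
      have h4 : Aux2.nrm (H *ᵥ b) ^ 2 ≤ (Aux2.nrm b / ε) ^ 2 :=
        pow_le_pow_left₀ (Aux2.nrm_nonneg _) h3 2
      rw [Aux2.nrm_sq] at h4
      calc Aux2.nsq (H *ᵥ b) ≤ (Aux2.nrm b / ε) ^ 2 := h4
        _ = Aux2.nsq b / ε ^ 2 := by rw [div_pow, Aux2.nrm_sq]
    have hfsq_col : ∀ {a b : ℕ} (A : Matrix (Fin a) (Fin b) ℝ),
        Aux.fsq A = ∑ j, Aux2.nsq (fun i => A i j) := by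
      intro a b A
      unfold Aux.fsq Aux2.nsq
      exact Finset.sum_comm
    rw [hfsq_col (H * B), hfsq_col B, Finset.sum_div]
    apply Finset.sum_le_sum
    intro j _
    have e : (fun i => (H * B) i j) = H *ᵥ (fun i => B i j) := by
      funext i
      simp [Matrix.mul_apply, Matrix.mulVec, dotProduct]
    rw [e]
    exact hcol _
  -- orthogonality bound
  have hCB_bound : Aux.fsq C + Aux.fsq B ≤ Aux.fsq X := by
    have hsplitC := Aux.fsq_split_left U hUU (X * V)
    have hsplitB := Aux.fsq_split_right V hVV (Uᵀ * X)
    have hsplitX := Aux.fsq_split_right V hVV X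
    have hsplitPX := Aux.fsq_split_right V hVV (U * (Uᵀ * X))
    have hC2 : Aux.fsq C = Aux.fsq (X * V) - Aux.fsq (U * (Uᵀ * (X * V))) := by
      rw [hC]; linarith
    have hB2 : Aux.fsq B = Aux.fsq (Uᵀ * X) - Aux.fsq (Uᵀ * X * (V * Vᵀ)) := by
      rw [hB]; linarith
    have e1 : Aux.fsq (U * (Uᵀ * (X * V))) = Aux.fsq (U * (Uᵀ * X) * (V * Vᵀ)) := by
      have e : U * (Uᵀ * (X * V)) = U * (Uᵀ * X) * V := by simp only [Matrix.mul_assoc]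
      rw [e, Aux.fsq_mulV V hVV]
    have e2 : Aux.fsq (Uᵀ * X * (V * Vᵀ)) = Aux.fsq (U * (Uᵀ * X) * (V * Vᵀ)) := by
      have e : Uᵀ * X * (V * Vᵀ) = Uᵀ * (X * (V * Vᵀ)) := by simp only [Matrix.mul_assoc]
      have e' : U * (Uᵀ * X) * (V * Vᵀ) = U * (Uᵀ * (X * (V * Vᵀ))) := by
        simp only [Matrix.mul_assoc]
      rw [e, e', Aux.fsq_Ut U hUU]
    have e3 : Aux.fsq (Uᵀ * X) = Aux.fsq (U * (Uᵀ * X)) := Aux.fsq_Ut U hUU X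
    have e4 : Aux.fsq (X * V) = Aux.fsq (X * (V * Vᵀ)) := Aux.fsq_mulV V hVV X
    have e5 : U * (Uᵀ * X) - U * (Uᵀ * X) * (V * Vᵀ) = U * (Uᵀ * (X - X * (V * Vᵀ))) := by
      rw [Matrix.mul_sub, Matrix.mul_sub]
      simp only [Matrix.mul_assoc]
    have e6 : Aux.fsq (U * (Uᵀ * (X - X * (V * Vᵀ)))) ≤ Aux.fsq (X - X * (V * Vᵀ)) :=
      Aux.fsq_mul_left_proj U hUU _
    have e7 := Aux.fsq_nonneg (U * (Uᵀ * X) * (V * Vᵀ))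
    rw [e5] at hsplitPX
    linarith
  -- final chain
  have hfX : RPCA.frob X ^ 2 = Aux.fsq X := by
    rw [frob_eq_fsq X, Real.sq_sqrt (Aux.fsq_nonneg X)]
  have step1 : RPCA.frob (M - Z) ≤ RPCA.frob (M - W) := hZ.2 W hrankW
  have step2 : RPCA.frob (M - W) = Real.sqrt (Aux.fsq (C * (H * B))) := by
    rw [hkey, hfrob_neg, frob_eq_fsq]
  have step3 : Real.sqrt (Aux.fsq (C * (H * B))) ≤
      Real.sqrt (Aux.fsq C * (Aux.fsq B / ε ^ 2)) := by
    apply Real.sqrt_le_sqrt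
    calc Aux.fsq (C * (H * B)) ≤ Aux.fsq C * Aux.fsq (H * B) := Aux.fsq_mul_le _ _
      _ ≤ Aux.fsq C * (Aux.fsq B / ε ^ 2) :=
          mul_le_mul_of_nonneg_left hHB_bound (Aux.fsq_nonneg C)
  have step4 : Real.sqrt (Aux.fsq C * (Aux.fsq B / ε ^ 2)) ≤ Aux.fsq X / (2 * ε) :=
    sqrt_amgm_div (Aux.fsq_nonneg C) (Aux.fsq_nonneg B) hCB_bound hεpos
  rw [hfrob_sub_comm, hfX]
  calc RPCA.frob (M - Z) ≤ RPCA.frob (M - W) := step1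
    _ = Real.sqrt (Aux.fsq (C * (H * B))) := step2
    _ ≤ Real.sqrt (Aux.fsq C * (Aux.fsq B / ε ^ 2)) := step3
    _ ≤ Aux.fsq X / (2 * ε) := step4
end
end

section
/- Rank-r Schur complement identity with norm bound: let M ∈ ℝ^{n₁×n₂} have rank r, let U ∈ ℝ^{n₁×r}, U^⊥ ∈ ℝ^{n₁×(n₁−r)}, V ∈ ℝ^{n₂×r}, V^⊥ ∈ ℝ^{n₂×(n₂−r)} be matrices with orthonormal columns such that [U, U^⊥] and [V, V^⊥] are orthogonal, and define the blocks M₁₁ = UᵀMV, M₁₂ = UᵀMV^⊥, M₂₁ = U^{⊥T}MV, M₂₂ = U^{⊥T}MV^⊥. If M₁₁ is invertible, then M₂₂ = M₂₁ M₁₁⁻¹ M₁₂ and ‖M₂₂‖_F ≤ ‖M₂₁‖_F ‖M₁₂‖_F / σ_r(M₁₁) ≤ (‖M₂₁‖_F² + ‖M₁₂‖_F²) / (2 σ_r(M₁₁)). -/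
open Matrix MeasureTheory ProbabilityTheory Filter
open scoped BigOperators ENNReal NNReal

noncomputable section

section SchurAux

open RPCA

lemma aux_cs {m n : ℕ} (B : Matrix (Fin m) (Fin n) ℝ) (x : Fin n → ℝ) :
    ∑ i, (∑ k, B i k * x k) ^ 2 ≤ (∑ i, ∑ k, B i k ^ 2) * ∑ k, x k ^ 2 := by
  calc ∑ i, (∑ k, B i k * x k) ^ 2
      ≤ ∑ i, ((∑ k, B i k ^ 2) * ∑ k, x k ^ 2) :=
        Finset.sum_le_sum fun i _ => Finset.sum_mul_sq_le_sq_mul_sq _ _ _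
    _ = (∑ i, ∑ k, B i k ^ 2) * ∑ k, x k ^ 2 := by rw [Finset.sum_mul]

lemma aux_frob_nonneg {m n : ℕ} (A : Matrix (Fin m) (Fin n) ℝ) : 0 ≤ frob A :=
  Real.sqrt_nonneg _

lemma aux_frob_sq {m n : ℕ} (A : Matrix (Fin m) (Fin n) ℝ) :
    frob A ^ 2 = ∑ i, ∑ j, A i j ^ 2 :=
  Real.sq_sqrt (by positivity)

lemma aux_frob_mul_le {m n p : ℕ} (A : Matrix (Fin m) (Fin n) ℝ)
    (B : Matrix (Fin n) (Fin p) ℝ) : frob (A * B) ≤ frob A * frob B := by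
  have h : ∑ i, ∑ j, ((A * B) i j) ^ 2
      ≤ (∑ i, ∑ k, A i k ^ 2) * (∑ i, ∑ j, B i j ^ 2) := by
    rw [Finset.sum_comm]
    calc ∑ j, ∑ i, ((A * B) i j) ^ 2
        ≤ ∑ j, ((∑ i, ∑ k, A i k ^ 2) * ∑ k, (B k j) ^ 2) := by
          refine Finset.sum_le_sum fun j _ => ?_
          simpa [Matrix.mul_apply] using aux_cs A (fun k => B k j)
      _ = (∑ i, ∑ k, A i k ^ 2) * (∑ i, ∑ j, B i j ^ 2) := by
          rw [← Finset.mul_sum]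
          exact congrArg _ Finset.sum_comm
  calc frob (A * B) = Real.sqrt (∑ i, ∑ j, ((A * B) i j) ^ 2) := rfl
    _ ≤ Real.sqrt ((∑ i, ∑ k, A i k ^ 2) * (∑ i, ∑ j, B i j ^ 2)) := Real.sqrt_le_sqrt h
    _ = frob A * frob B := by
        rw [Real.sqrt_mul (by positivity)]; rfl

lemma aux_sigmaMin_nonneg {r : ℕ} (A : Matrix (Fin r) (Fin r) ℝ) : 0 ≤ sigmaMin A :=
  Real.sInf_nonneg (by rintro c ⟨v, hv, rfl⟩; exact Real.sqrt_nonneg _)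

lemma aux_sigma_vec {r : ℕ} (A : Matrix (Fin r) (Fin r) ℝ) (w : Fin r → ℝ) :
    sigmaMin A ^ 2 * ∑ k, w k ^ 2 ≤ ∑ i, (∑ k, A i k * w k) ^ 2 := by
  by_cases hw : ∑ k, w k ^ 2 = 0
  · have hw0 : ∀ k, w k = 0 := by
      intro k
      have h1 := (Finset.sum_eq_zero_iff_of_nonneg
        (fun k _ => sq_nonneg (w k))).mp hw k (Finset.mem_univ k)
      exact pow_eq_zero_iff two_ne_zero |>.mp h1
    have : ∀ k, w k ^ 2 = 0 := fun k => by rw [hw0 k]; ring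
    simp only [hw, mul_zero]
    positivity
  · have hpos : 0 < ∑ k, w k ^ 2 := lt_of_le_of_ne (by positivity) (Ne.symm hw)
    set c := Real.sqrt (∑ k, w k ^ 2) with hc
    have hcpos : 0 < c := Real.sqrt_pos.mpr hpos
    have hcsq : c ^ 2 = ∑ k, w k ^ 2 := Real.sq_sqrt hpos.le
    have hunit : (∑ k, (c⁻¹ * w k) ^ 2) = 1 := by
      have : (∑ k, (c⁻¹ * w k) ^ 2) = c⁻¹ ^ 2 * ∑ k, w k ^ 2 := by
        rw [Finset.mul_sum]; exact Finset.sum_congr rfl fun k _ => by ring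
      rw [this, ← hcsq]
      field_simp
    have hbdd : BddBelow {c | ∃ v : Fin r → ℝ, (∑ k, (v k) ^ 2) = 1 ∧
        c = Real.sqrt (∑ i, (∑ k, A i k * v k) ^ 2)} := by
      refine ⟨0, ?_⟩
      rintro x ⟨v, hv, rfl⟩
      exact Real.sqrt_nonneg _
    have hle : sigmaMin A ≤ Real.sqrt (∑ i, (∑ k, A i k * (c⁻¹ * w k)) ^ 2) :=
      csInf_le hbdd ⟨fun k => c⁻¹ * w k, hunit, rfl⟩
    have hrw : Real.sqrt (∑ i, (∑ k, A i k * (c⁻¹ * w k)) ^ 2)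
        = c⁻¹ * Real.sqrt (∑ i, (∑ k, A i k * w k) ^ 2) := by
      have h1 : (∑ i, (∑ k, A i k * (c⁻¹ * w k)) ^ 2)
          = c⁻¹ ^ 2 * ∑ i, (∑ k, A i k * w k) ^ 2 := by
        rw [Finset.mul_sum]
        refine Finset.sum_congr rfl fun i _ => ?_
        have : (∑ k, A i k * (c⁻¹ * w k)) = c⁻¹ * ∑ k, A i k * w k := by
          rw [Finset.mul_sum]; exact Finset.sum_congr rfl fun k _ => by ring
        rw [this]; ring
      rw [h1, Real.sqrt_mul (by positivity), Real.sqrt_sq (by positivity)]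
    rw [hrw] at hle
    have hle2 : sigmaMin A * c ≤ Real.sqrt (∑ i, (∑ k, A i k * w k) ^ 2) := by
      rw [← le_div_iff₀ hcpos]
      rw [div_eq_inv_mul]
      exact hle
    have hsq := pow_le_pow_left₀ (mul_nonneg (aux_sigmaMin_nonneg A) hcpos.le) hle2 2
    rw [Real.sq_sqrt (by positivity), mul_pow, hcsq] at hsq
    exact hsq

lemma aux_sigma_mul {r p : ℕ} (A : Matrix (Fin r) (Fin r) ℝ) (D : Matrix (Fin r) (Fin p) ℝ) :
    sigmaMin A * frob D ≤ frob (A * D) := by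
  have h2 : (sigmaMin A * frob D) ^ 2 ≤ frob (A * D) ^ 2 := by
    rw [mul_pow, aux_frob_sq, aux_frob_sq]
    calc sigmaMin A ^ 2 * ∑ i, ∑ j, D i j ^ 2
        = ∑ j, (sigmaMin A ^ 2 * ∑ k, D k j ^ 2) := by
          rw [← Finset.mul_sum, Finset.sum_comm]
      _ ≤ ∑ j, ∑ i, (∑ k, A i k * D k j) ^ 2 :=
          Finset.sum_le_sum fun j _ => aux_sigma_vec A _
      _ = ∑ i, ∑ j, ((A * D) i j) ^ 2 := by
          rw [Finset.sum_comm]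
          exact Finset.sum_congr rfl fun i _ => Finset.sum_congr rfl fun j _ => by
            rw [Matrix.mul_apply]
  have h3 := Real.sqrt_le_sqrt h2
  rwa [Real.sqrt_sq (mul_nonneg (aux_sigmaMin_nonneg A) (aux_frob_nonneg D)),
    Real.sqrt_sq (aux_frob_nonneg _)] at h3

lemma aux_sigmaMin_pos {r : ℕ} (hr : 0 < r) (A : Matrix (Fin r) (Fin r) ℝ)
    (h : IsUnit A) : 0 < sigmaMin A := by
  have hdet := (Matrix.isUnit_iff_isUnit_det A).mp h
  have hAiA : A⁻¹ * A = 1 := Matrix.nonsing_inv_mul A hdet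
  have hne : frob A⁻¹ ≠ 0 := by
    intro h0
    have hs : ∑ i, ∑ j, (A⁻¹ i j) ^ 2 = 0 := by
      have := aux_frob_sq A⁻¹
      rw [h0] at this
      simpa using this.symm
    have hall : A⁻¹ = 0 := by
      ext i j
      have h1 := (Finset.sum_eq_zero_iff_of_nonneg
        (fun i _ => Finset.sum_nonneg fun j _ => sq_nonneg _)).mp hs i (Finset.mem_univ i)
      have h2 := (Finset.sum_eq_zero_iff_of_nonneg
        (fun j _ => sq_nonneg _)).mp h1 j (Finset.mem_univ j)
      simpa using pow_eq_zero_iff two_ne_zero |>.mp h2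
    have hcontra : (1 : Matrix (Fin r) (Fin r) ℝ) ⟨0, hr⟩ ⟨0, hr⟩ = 0 := by
      rw [← hAiA, hall, Matrix.zero_mul]
      rfl
    rw [Matrix.one_apply_eq] at hcontra
    exact one_ne_zero hcontra
  have hfpos : 0 < frob A⁻¹ := lt_of_le_of_ne (aux_frob_nonneg _) (Ne.symm hne)
  have hlow : (frob A⁻¹)⁻¹ ≤ sigmaMin A := by
    apply le_csInf
    · refine ⟨_, ⟨Pi.single (⟨0, hr⟩ : Fin r) 1, ?_, rfl⟩⟩
      simp [Pi.single_apply]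
    · rintro b ⟨v, hv, rfl⟩
      have hvv : ∀ i, v i = ∑ k, A⁻¹ i k * (∑ l, A k l * v l) := by
        intro i
        have : A⁻¹ *ᵥ (A *ᵥ v) = v := by
          rw [Matrix.mulVec_mulVec, hAiA, Matrix.one_mulVec]
        have h1 := congrFun this i
        simp only [Matrix.mulVec, dotProduct] at h1
        exact h1.symm
      have hcs : (1 : ℝ) ≤ (∑ i, ∑ k, (A⁻¹ i k) ^ 2) * ∑ i, (∑ k, A i k * v k) ^ 2 := by
        calc (1 : ℝ) = ∑ i, v i ^ 2 := hv.symm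
          _ = ∑ i, (∑ k, A⁻¹ i k * (∑ l, A k l * v l)) ^ 2 :=
              Finset.sum_congr rfl fun i _ => by rw [← hvv i]
          _ ≤ (∑ i, ∑ k, (A⁻¹ i k) ^ 2) * ∑ k, (∑ l, A k l * v l) ^ 2 :=
              aux_cs A⁻¹ _
      have hfsq : (∑ i, ∑ k, (A⁻¹ i k) ^ 2) = frob A⁻¹ ^ 2 := (aux_frob_sq _).symm
      rw [hfsq] at hcs
      have hSpos : (frob A⁻¹ ^ 2)⁻¹ ≤ ∑ i, (∑ k, A i k * v k) ^ 2 := by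
        rw [inv_eq_one_div, div_le_iff₀ (by positivity)]
        linarith [hcs]
      have := Real.sqrt_le_sqrt hSpos
      rwa [show (frob A⁻¹ ^ 2)⁻¹ = ((frob A⁻¹)⁻¹) ^ 2 by rw [inv_pow],
        Real.sqrt_sq (by positivity)] at this
  exact lt_of_lt_of_le (inv_pos.mpr hfpos) hlow

end SchurAux

/-- rank-r Schur complement identity with Frobenius norm bound. -/
theorem schur_complement_rank_bound
    {n₁ n₂ r : ℕ}
    (M : Matrix (Fin n₁) (Fin n₂) ℝ) (hrank : M.rank = r)
    (U : Matrix (Fin n₁) (Fin r) ℝ) (Up : Matrix (Fin n₁) (Fin (n₁ - r)) ℝ)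
    (V : Matrix (Fin n₂) (Fin r) ℝ) (Vp : Matrix (Fin n₂) (Fin (n₂ - r)) ℝ)
    (hU : Uᵀ * U = 1) (hUp : Upᵀ * Up = 1) (hUUp : Uᵀ * Up = 0)
    (hUfull : U * Uᵀ + Up * Upᵀ = 1)
    (hV : Vᵀ * V = 1) (hVp : Vpᵀ * Vp = 1) (hVVp : Vᵀ * Vp = 0)
    (hVfull : V * Vᵀ + Vp * Vpᵀ = 1)
    (hinv : IsUnit (Uᵀ * M * V)) :
    Upᵀ * M * Vp = (Upᵀ * M * V) * (Uᵀ * M * V)⁻¹ * (Uᵀ * M * Vp) ∧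
    RPCA.frob (Upᵀ * M * Vp) ≤
      RPCA.frob (Upᵀ * M * V) * RPCA.frob (Uᵀ * M * Vp) / RPCA.sigmaMin (Uᵀ * M * V) ∧
    RPCA.frob (Upᵀ * M * V) * RPCA.frob (Uᵀ * M * Vp) / RPCA.sigmaMin (Uᵀ * M * V) ≤
      (RPCA.frob (Upᵀ * M * V) ^ 2 + RPCA.frob (Uᵀ * M * Vp) ^ 2) /
        (2 * RPCA.sigmaMin (Uᵀ * M * V)) := by
  have hdet : IsUnit (Uᵀ * M * V).det := (Matrix.isUnit_iff_isUnit_det _).mp hinv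
  have hAAi : (Uᵀ * M * V) * (Uᵀ * M * V)⁻¹ = 1 := Matrix.mul_nonsing_inv _ hdet
  -- rank facts
  have hrA : (Uᵀ * M * V).rank = r := by
    rw [Matrix.rank_of_isUnit _ hinv, Fintype.card_fin]
  have hrUM : (Uᵀ * M).rank = r := by
    have h2 : (Uᵀ * M * V).rank ≤ (Uᵀ * M).rank := Matrix.rank_mul_le_left (Uᵀ * M) V
    have h3 : (Uᵀ * M).rank ≤ M.rank := Matrix.rank_mul_le_right Uᵀ M
    omega
  -- kernel equality
  have hker : LinearMap.ker M.mulVecLin = LinearMap.ker (Uᵀ * M).mulVecLin := by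
    apply Submodule.eq_of_le_of_finrank_eq
    · intro v hv
      rw [LinearMap.mem_ker] at hv ⊢
      rw [Matrix.mulVecLin_mul, LinearMap.comp_apply, hv, map_zero]
    · have e1 := LinearMap.finrank_range_add_finrank_ker M.mulVecLin
      have e2 := LinearMap.finrank_range_add_finrank_ker (Uᵀ * M).mulVecLin
      rw [Module.finrank_fin_fun] at e1 e2
      have r1 : M.rank = Module.finrank ℝ (LinearMap.range M.mulVecLin) := rfl
      have r2 : (Uᵀ * M).rank = Module.finrank ℝ (LinearMap.range (Uᵀ * M).mulVecLin) := rfl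
      omega
  -- the Schur identity
  have hUMK : (Uᵀ * M) * (1 - V * ((Uᵀ * M * V)⁻¹ * (Uᵀ * M))) = 0 := by
    have h1 : Uᵀ * M * (V * ((Uᵀ * M * V)⁻¹ * (Uᵀ * M))) = Uᵀ * M := by
      calc Uᵀ * M * (V * ((Uᵀ * M * V)⁻¹ * (Uᵀ * M)))
          = (Uᵀ * M * V) * (Uᵀ * M * V)⁻¹ * (Uᵀ * M) := by
            simp only [Matrix.mul_assoc]
        _ = Uᵀ * M := by rw [hAAi, Matrix.one_mul]
    rw [Matrix.mul_sub, Matrix.mul_one, h1, sub_self]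
  have hMK : M * (1 - V * ((Uᵀ * M * V)⁻¹ * (Uᵀ * M))) = 0 := by
    set K := 1 - V * ((Uᵀ * M * V)⁻¹ * (Uᵀ * M)) with hK
    have hcol : ∀ v : Fin n₂ → ℝ, M.mulVec (K.mulVec v) = 0 := by
      intro v
      have hmem : K.mulVec v ∈ LinearMap.ker (Uᵀ * M).mulVecLin := by
        rw [LinearMap.mem_ker, Matrix.mulVecLin_apply, Matrix.mulVec_mulVec, hUMK,
          Matrix.zero_mulVec]
      rw [← hker, LinearMap.mem_ker, Matrix.mulVecLin_apply] at hmem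
      exact hmem
    ext i j
    have h1 := congrFun (hcol (Pi.single j 1)) i
    rw [Matrix.mulVec_mulVec] at h1
    simpa [Matrix.mulVec_single] using h1
  have hMid : M * (V * ((Uᵀ * M * V)⁻¹ * (Uᵀ * M))) = M := by
    rw [Matrix.mul_sub, Matrix.mul_one, sub_eq_zero] at hMK
    exact hMK.symm
  have part1 : Upᵀ * M * Vp = (Upᵀ * M * V) * (Uᵀ * M * V)⁻¹ * (Uᵀ * M * Vp) := by
    calc Upᵀ * M * Vp
        = Upᵀ * (M * (V * ((Uᵀ * M * V)⁻¹ * (Uᵀ * M)))) * Vp := by rw [hMid]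
      _ = (Upᵀ * M * V) * (Uᵀ * M * V)⁻¹ * (Uᵀ * M * Vp) := by
          simp only [Matrix.mul_assoc]
  refine ⟨part1, ?_, ?_⟩
  · -- first inequality
    rcases Nat.eq_zero_or_pos r with hr0 | hr
    · have hzero : Upᵀ * M * Vp = 0 := by
        subst hr0
        rw [part1]
        ext i j
        rw [Matrix.mul_apply]
        simp
      rw [hzero]
      have : RPCA.frob (0 : Matrix (Fin (n₁ - r)) (Fin (n₂ - r)) ℝ) = 0 := by
        simp [RPCA.frob]
      rw [this]
      exact div_nonneg (mul_nonneg (aux_frob_nonneg _) (aux_frob_nonneg _))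
        (aux_sigmaMin_nonneg _)
    · have hσ : 0 < RPCA.sigmaMin (Uᵀ * M * V) := aux_sigmaMin_pos hr _ hinv
      have h1 : RPCA.frob (Upᵀ * M * Vp)
          ≤ RPCA.frob (Upᵀ * M * V) * RPCA.frob ((Uᵀ * M * V)⁻¹ * (Uᵀ * M * Vp)) := by
        rw [part1, Matrix.mul_assoc]
        exact aux_frob_mul_le _ _
      have h2 : RPCA.sigmaMin (Uᵀ * M * V) * RPCA.frob ((Uᵀ * M * V)⁻¹ * (Uᵀ * M * Vp))
          ≤ RPCA.frob (Uᵀ * M * Vp) := by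
        have h3 := aux_sigma_mul (Uᵀ * M * V) ((Uᵀ * M * V)⁻¹ * (Uᵀ * M * Vp))
        have h5 : (Uᵀ * M * V) * ((Uᵀ * M * V)⁻¹ * (Uᵀ * M * Vp)) = Uᵀ * M * Vp := by
          rw [← Matrix.mul_assoc, hAAi, Matrix.one_mul]
        rwa [h5] at h3
      have h4 : RPCA.frob ((Uᵀ * M * V)⁻¹ * (Uᵀ * M * Vp))
          ≤ RPCA.frob (Uᵀ * M * Vp) / RPCA.sigmaMin (Uᵀ * M * V) := by
        rw [le_div_iff₀ hσ, mul_comm]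
        exact h2
      calc RPCA.frob (Upᵀ * M * Vp)
          ≤ RPCA.frob (Upᵀ * M * V) * RPCA.frob ((Uᵀ * M * V)⁻¹ * (Uᵀ * M * Vp)) := h1
        _ ≤ RPCA.frob (Upᵀ * M * V) *
              (RPCA.frob (Uᵀ * M * Vp) / RPCA.sigmaMin (Uᵀ * M * V)) :=
            mul_le_mul_of_nonneg_left h4 (aux_frob_nonneg _)
        _ = RPCA.frob (Upᵀ * M * V) * RPCA.frob (Uᵀ * M * Vp) /
              RPCA.sigmaMin (Uᵀ * M * V) := by rw [mul_div_assoc]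
  · -- second inequality
    rcases eq_or_lt_of_le (aux_sigmaMin_nonneg (Uᵀ * M * V)) with h0 | hpos
    · rw [← h0]
      simp
    · rw [div_le_div_iff₀ hpos (by linarith)]
      nlinarith [mul_nonneg (sq_nonneg (RPCA.frob (Upᵀ * M * V) - RPCA.frob (Uᵀ * M * Vp)))
        hpos.le]
end
end

section
/- Incoherent tangent-space entries on a sparse index set: let L* ∈ ℝ^{n₁×n₂} have rank r with thin SVD L* = U*Σ*V*ᵀ and be μ-incoherent, let Z = U*Aᵀ + BV*ᵀ for some A ∈ ℝ^{n₂×r}, B ∈ ℝ^{n₁×r}, and let S ⊆ [n₁]×[n₂] be an index set containing at most β n₂ entries in each row and at most β n₁ entries in each column. Then Σ_{(i,j)∈S} Z_ij² ≤ 2 β μ r ‖Z‖_F². -/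
open Matrix MeasureTheory ProbabilityTheory Filter
open scoped BigOperators ENNReal NNReal

noncomputable section

private lemma sum_entrywise_mul_eq_trace {m n : ℕ} (M N : Matrix (Fin m) (Fin n) ℝ) :
    ∑ i, ∑ j, M i j * N i j = Matrix.trace (Mᵀ * N) := by
  simp only [Matrix.trace, Matrix.diag, Matrix.mul_apply, Matrix.transpose_apply]
  rw [Finset.sum_comm]

private lemma sum_fiber_le' {α ι : Type*} [Fintype ι] [DecidableEq ι]
    (S : Finset α) (g : α → ι) (f : ι → ℝ) (hf : ∀ j, 0 ≤ f j) (c : ℝ)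
    (hc : ∀ j, ((S.filter fun q => g q = j).card : ℝ) ≤ c) :
    ∑ q ∈ S, f (g q) ≤ c * ∑ j, f j := by
  rw [← Finset.sum_fiberwise S g (fun q => f (g q)), Finset.mul_sum]
  refine Finset.sum_le_sum fun j _ => ?_
  have h1 : ∑ q ∈ S.filter (fun q => g q = j), f (g q)
      = ((S.filter fun q => g q = j).card : ℝ) * f j := by
    rw [Finset.sum_congr rfl (fun q hq => by rw [(Finset.mem_filter.1 hq).2]),
      Finset.sum_const, nsmul_eq_mul]
  rw [h1]
  exact mul_le_mul_of_nonneg_right (hc j) (hf j)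

set_option maxHeartbeats 1000000 in
/-- entries of a tangent-space element of an incoherent matrix on a sparse
index set. -/
theorem incoherent_tangent_sparse_sum
    {n₁ n₂ r : ℕ}
    (μc β : ℝ)
    (Lstar : Matrix (Fin n₁) (Fin n₂) ℝ)
    (Ustar : Matrix (Fin n₁) (Fin r) ℝ) (sstar : Fin r → ℝ)
    (Vstar : Matrix (Fin n₂) (Fin r) ℝ)
    (hSVD : RPCA.IsThinSVD Lstar Ustar sstar Vstar)
    (hinc : RPCA.Incoherent μc Ustar Vstar)
    (A : Matrix (Fin n₂) (Fin r) ℝ) (B : Matrix (Fin n₁) (Fin r) ℝ)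
    (Z : Matrix (Fin n₁) (Fin n₂) ℝ) (hZ : Z = Ustar * Aᵀ + B * Vstarᵀ)
    (S : Finset (Fin n₁ × Fin n₂))
    (hrow : ∀ i, ((S.filter fun q => q.1 = i).card : ℝ) ≤ β * n₂)
    (hcol : ∀ j, ((S.filter fun q => q.2 = j).card : ℝ) ≤ β * n₁) :
    ∑ q ∈ S, (Z q.1 q.2) ^ 2 ≤ 2 * β * μc * r * RPCA.frob Z ^ 2 := by
  classical
  obtain ⟨hUU, hVV, -, -, -⟩ := hSVD
  obtain ⟨hU, hV⟩ := hinc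
  -- degenerate cases
  rcases Nat.eq_zero_or_pos r with hr | hr
  · subst hr
    have hZ0 : Z = 0 := by
      rw [hZ]; ext i j; simp [Matrix.mul_apply]
    simp [hZ0, RPCA.frob]
  rcases Nat.eq_zero_or_pos n₁ with hn₁ | hn₁
  · subst hn₁
    have hS : S = ∅ := Finset.eq_empty_of_forall_notMem fun q _ => q.1.elim0
    have : RPCA.frob Z = 0 := by simp [RPCA.frob]
    simp [hS, this]
  rcases Nat.eq_zero_or_pos n₂ with hn₂ | hn₂
  · subst hn₂
    have hS : S = ∅ := Finset.eq_empty_of_forall_notMem fun q _ => q.2.elim0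
    have : RPCA.frob Z = 0 := by simp [RPCA.frob]
    simp [hS, this]
  -- nondegenerate case
  have i0 : Fin n₁ := ⟨0, hn₁⟩
  have j0 : Fin n₂ := ⟨0, hn₂⟩
  have k0 : Fin r := ⟨0, hr⟩
  have hn₁' : (0:ℝ) < n₁ := by exact_mod_cast hn₁
  have hn₂' : (0:ℝ) < n₂ := by exact_mod_cast hn₂
  have hβ : 0 ≤ β := by
    have h1 := hrow i0
    have h2 : (0:ℝ) ≤ ((S.filter fun q => q.1 = i0).card : ℝ) := Nat.cast_nonneg _
    nlinarith
  -- μc * r / n₁ ≥ 0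
  have hμ1 : 0 ≤ μc * r / n₁ := by
    by_contra h
    push_neg at h
    have hall : ∀ i k, Ustar i k = 0 := by
      intro i k
      have h1 := hU i
      have h2 : Real.sqrt (μc * r / n₁) = 0 := Real.sqrt_eq_zero_of_nonpos h.le
      rw [h2] at h1
      have h3 : ∑ l, (Ustar i l) ^ 2 = 0 := by
        have := Real.sqrt_nonneg (∑ l, (Ustar i l) ^ 2)
        have h4 : Real.sqrt (∑ l, (Ustar i l) ^ 2) = 0 := le_antisymm h1 this
        have h5 : 0 ≤ ∑ l, (Ustar i l) ^ 2 := by positivity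
        nlinarith [Real.sq_sqrt h5]
      have := (Finset.sum_eq_zero_iff_of_nonneg (fun l _ => sq_nonneg (Ustar i l))).1 h3 k (Finset.mem_univ k)
      nlinarith
    have hc := congrFun (congrFun hUU k0) k0
    simp [Matrix.mul_apply, hall, Matrix.one_apply] at hc
  have hμ2 : 0 ≤ μc * r / n₂ := by
    have : 0 ≤ μc := by
      by_contra h
      push_neg at h
      have : μc * r / n₁ < 0 := by
        apply div_neg_of_neg_of_pos _ hn₁'
        have : (0:ℝ) < r := by exact_mod_cast hr
        nlinarith
      linarith
    positivity
  -- orthogonal decomposition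
  obtain ⟨A2, hA2⟩ : ∃ M : Matrix (Fin n₂) (Fin r) ℝ, M = Zᵀ * Ustar := ⟨_, rfl⟩
  obtain ⟨B2, hB2⟩ : ∃ M : Matrix (Fin n₁) (Fin r) ℝ, M = B - Ustar * (Ustarᵀ * B) := ⟨_, rfl⟩
  have hUB2 : Ustarᵀ * B2 = 0 := by
    rw [hB2, Matrix.mul_sub, ← Matrix.mul_assoc, ← Matrix.mul_assoc, hUU, Matrix.one_mul,
      sub_self]
  have hA2T : A2ᵀ = Ustarᵀ * Z := by
    rw [hA2, Matrix.transpose_mul, Matrix.transpose_transpose]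
  have hZdec : Z = Ustar * A2ᵀ + B2 * Vstarᵀ := by
    rw [hA2T, hB2, hZ]
    have e1 : Ustarᵀ * (Ustar * Aᵀ + B * Vstarᵀ) = Aᵀ + Ustarᵀ * B * Vstarᵀ := by
      rw [Matrix.mul_add, ← Matrix.mul_assoc, hUU, Matrix.one_mul, Matrix.mul_assoc]
    rw [e1, Matrix.mul_add, Matrix.sub_mul]
    simp only [Matrix.mul_assoc]
    abel
  obtain ⟨P, hP⟩ : ∃ M : Matrix (Fin n₁) (Fin n₂) ℝ, M = Ustar * A2ᵀ := ⟨_, rfl⟩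
  obtain ⟨Q, hQ⟩ : ∃ M : Matrix (Fin n₁) (Fin n₂) ℝ, M = B2 * Vstarᵀ := ⟨_, rfl⟩
  -- trace identities
  have ePP : ∑ i, ∑ j, P i j ^ 2 = ∑ j, ∑ k, A2 j k ^ 2 := by
    have h1 : ∑ i, ∑ j, P i j * P i j = Matrix.trace (Pᵀ * P) :=
      sum_entrywise_mul_eq_trace P P
    have h2 : Pᵀ * P = A2 * A2ᵀ := by
      rw [hP, Matrix.transpose_mul, Matrix.transpose_transpose, Matrix.mul_assoc,
        ← Matrix.mul_assoc Ustarᵀ Ustar A2ᵀ, hUU, Matrix.one_mul]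
    have h3 : Matrix.trace (A2 * A2ᵀ) = ∑ k, ∑ j, A2ᵀ k j * A2ᵀ k j := by
      rw [show A2 * A2ᵀ = (A2ᵀ)ᵀ * A2ᵀ by rw [Matrix.transpose_transpose],
        ← sum_entrywise_mul_eq_trace]
    simp only [sq]
    rw [h1, h2, h3, Finset.sum_comm]
    simp [Matrix.transpose_apply]
  have eQQ : ∑ i, ∑ j, Q i j ^ 2 = ∑ i, ∑ k, B2 i k ^ 2 := by
    have h1 : ∑ i, ∑ j, Q i j * Q i j = Matrix.trace (Qᵀ * Q) :=
      sum_entrywise_mul_eq_trace Q Q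
    have h2 : Qᵀ * Q = Vstar * (B2ᵀ * (B2 * Vstarᵀ)) := by
      rw [hQ, Matrix.transpose_mul, Matrix.transpose_transpose]
      simp only [Matrix.mul_assoc]
    have h3 : Matrix.trace (Vstar * (B2ᵀ * (B2 * Vstarᵀ))) = Matrix.trace (B2ᵀ * B2) := by
      rw [Matrix.trace_mul_comm]
      simp only [Matrix.mul_assoc]
      rw [hVV, Matrix.mul_one]
    have h4 : Matrix.trace (B2ᵀ * B2) = ∑ i, ∑ k, B2 i k * B2 i k :=
      (sum_entrywise_mul_eq_trace B2 B2).symm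
    simp only [sq]
    rw [h1, h2, h3, h4]
  have ePQ : ∑ i, ∑ j, P i j * Q i j = 0 := by
    rw [sum_entrywise_mul_eq_trace]
    have h2 : Pᵀ * Q = 0 := by
      have e : Pᵀ * Q = A2 * (Ustarᵀ * B2 * Vstarᵀ) := by
        rw [hP, hQ, Matrix.transpose_mul, Matrix.transpose_transpose]
        simp only [Matrix.mul_assoc]
      rw [e, hUB2, Matrix.zero_mul, Matrix.mul_zero]
    rw [h2, Matrix.trace_zero]
  -- Frobenius identity
  have hfrob : RPCA.frob Z ^ 2 = (∑ j, ∑ k, A2 j k ^ 2) + (∑ i, ∑ k, B2 i k ^ 2) := by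
    have h0 : RPCA.frob Z ^ 2 = ∑ i, ∑ j, Z i j ^ 2 := by
      simp only [RPCA.frob]
      exact Real.sq_sqrt (by positivity)
    have h1 : ∀ i j, Z i j = P i j + Q i j := by
      intro i j
      rw [hZdec, hP, hQ]; rfl
    have h2 : ∑ i, ∑ j, Z i j ^ 2
        = (∑ i, ∑ j, P i j ^ 2) + 2 * (∑ i, ∑ j, P i j * Q i j)
          + (∑ i, ∑ j, Q i j ^ 2) := by
      have e : ∀ i j, Z i j ^ 2 = P i j ^ 2 + 2 * (P i j * Q i j) + Q i j ^ 2 := by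
        intro i j; rw [h1]; ring
      rw [show (2:ℝ) * (∑ i, ∑ j, P i j * Q i j) = ∑ i, ∑ j, 2 * (P i j * Q i j) by
        simp [Finset.mul_sum]]
      simp only [e, Finset.sum_add_distrib]
    rw [h0, h2, ePP, eQQ, ePQ]
    ring
  -- pointwise bounds
  have hUrow : ∀ i, ∑ k, (Ustar i k) ^ 2 ≤ μc * r / n₁ := by
    intro i
    have h1 := hU i
    have h5 : 0 ≤ ∑ k, (Ustar i k) ^ 2 := by positivity
    calc ∑ k, (Ustar i k) ^ 2 = Real.sqrt (∑ k, (Ustar i k) ^ 2) ^ 2 := (Real.sq_sqrt h5).symm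
      _ ≤ Real.sqrt (μc * r / n₁) ^ 2 := pow_le_pow_left₀ (Real.sqrt_nonneg _) h1 2
      _ = μc * r / n₁ := Real.sq_sqrt hμ1
  have hVrow : ∀ j, ∑ k, (Vstar j k) ^ 2 ≤ μc * r / n₂ := by
    intro j
    have h1 := hV j
    have h5 : 0 ≤ ∑ k, (Vstar j k) ^ 2 := by positivity
    calc ∑ k, (Vstar j k) ^ 2 = Real.sqrt (∑ k, (Vstar j k) ^ 2) ^ 2 := (Real.sq_sqrt h5).symm
      _ ≤ Real.sqrt (μc * r / n₂) ^ 2 := pow_le_pow_left₀ (Real.sqrt_nonneg _) h1 2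
      _ = μc * r / n₂ := Real.sq_sqrt hμ2
  have hPb : ∀ i j, P i j ^ 2 ≤ (μc * r / n₁) * ∑ k, A2 j k ^ 2 := by
    intro i j
    have h1 : P i j = ∑ k, Ustar i k * A2 j k := by
      rw [hP]; simp [Matrix.mul_apply]
    have h2 := Finset.sum_mul_sq_le_sq_mul_sq Finset.univ (fun k => Ustar i k) (fun k => A2 j k)
    have h3 : 0 ≤ ∑ k, A2 j k ^ 2 := by positivity
    rw [h1]
    calc (∑ k, Ustar i k * A2 j k) ^ 2
        ≤ (∑ k, Ustar i k ^ 2) * (∑ k, A2 j k ^ 2) := h2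
      _ ≤ (μc * r / n₁) * ∑ k, A2 j k ^ 2 :=
        mul_le_mul_of_nonneg_right (hUrow i) h3
  have hQb : ∀ i j, Q i j ^ 2 ≤ (μc * r / n₂) * ∑ k, B2 i k ^ 2 := by
    intro i j
    have h1 : Q i j = ∑ k, Vstar j k * B2 i k := by
      rw [hQ]; simp only [Matrix.mul_apply, Matrix.transpose_apply]
      exact Finset.sum_congr rfl fun k _ => mul_comm _ _
    have h2 := Finset.sum_mul_sq_le_sq_mul_sq Finset.univ (fun k => Vstar j k) (fun k => B2 i k)
    have h3 : 0 ≤ ∑ k, B2 i k ^ 2 := by positivity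
    rw [h1]
    calc (∑ k, Vstar j k * B2 i k) ^ 2
        ≤ (∑ k, Vstar j k ^ 2) * (∑ k, B2 i k ^ 2) := h2
      _ ≤ (μc * r / n₂) * ∑ k, B2 i k ^ 2 :=
        mul_le_mul_of_nonneg_right (hVrow j) h3
  -- sums over S
  have hSP : ∑ q ∈ S, P q.1 q.2 ^ 2 ≤ β * (μc * r) * ∑ j, ∑ k, A2 j k ^ 2 := by
    have h1 : ∑ q ∈ S, P q.1 q.2 ^ 2
        ≤ ∑ q ∈ S, (μc * r / n₁) * ∑ k, A2 q.2 k ^ 2 :=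
      Finset.sum_le_sum fun q _ => hPb q.1 q.2
    have h2 : ∑ q ∈ S, (μc * r / n₁) * ∑ k, A2 q.2 k ^ 2
        ≤ (β * n₁) * ∑ j, (μc * r / n₁) * ∑ k, A2 j k ^ 2 :=
      sum_fiber_le' S (fun q => q.2) (fun j => (μc * r / n₁) * ∑ k, A2 j k ^ 2)
        (fun j => by positivity) (β * n₁) hcol
    have h3 : (β * n₁) * ∑ j, (μc * r / n₁) * ∑ k, A2 j k ^ 2
        = β * (μc * r) * ∑ j, ∑ k, A2 j k ^ 2 := by
      rw [← Finset.mul_sum, ← mul_assoc]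
      congr 1
      field_simp
    linarith
  have hSQ : ∑ q ∈ S, Q q.1 q.2 ^ 2 ≤ β * (μc * r) * ∑ i, ∑ k, B2 i k ^ 2 := by
    have h1 : ∑ q ∈ S, Q q.1 q.2 ^ 2
        ≤ ∑ q ∈ S, (μc * r / n₂) * ∑ k, B2 q.1 k ^ 2 :=
      Finset.sum_le_sum fun q _ => hQb q.1 q.2
    have h2 : ∑ q ∈ S, (μc * r / n₂) * ∑ k, B2 q.1 k ^ 2
        ≤ (β * n₂) * ∑ i, (μc * r / n₂) * ∑ k, B2 i k ^ 2 :=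
      sum_fiber_le' S (fun q => q.1) (fun i => (μc * r / n₂) * ∑ k, B2 i k ^ 2)
        (fun i => by positivity) (β * n₂) hrow
    have h3 : (β * n₂) * ∑ i, (μc * r / n₂) * ∑ k, B2 i k ^ 2
        = β * (μc * r) * ∑ i, ∑ k, B2 i k ^ 2 := by
      rw [← Finset.mul_sum, ← mul_assoc]
      congr 1
      field_simp
    linarith
  -- combine
  have hptw : ∑ q ∈ S, Z q.1 q.2 ^ 2
      ≤ 2 * ∑ q ∈ S, P q.1 q.2 ^ 2 + 2 * ∑ q ∈ S, Q q.1 q.2 ^ 2 := by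
    rw [Finset.mul_sum, Finset.mul_sum, ← Finset.sum_add_distrib]
    refine Finset.sum_le_sum fun q _ => ?_
    have h1 : Z q.1 q.2 = P q.1 q.2 + Q q.1 q.2 := by rw [hZdec, hP, hQ]; rfl
    rw [h1]
    nlinarith [sq_nonneg (P q.1 q.2 - Q q.1 q.2)]
  rw [hfrob]
  have hfin : 2 * β * μc * (r:ℝ) * ((∑ j, ∑ k, A2 j k ^ 2) + (∑ i, ∑ k, B2 i k ^ 2))
      = 2 * (β * (μc * r) * ∑ j, ∑ k, A2 j k ^ 2)
        + 2 * (β * (μc * r) * ∑ i, ∑ k, B2 i k ^ 2) := by ring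
  rw [hfin]
  linarith [hSP, hSQ, hptw]
end
end
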